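/- arXiv:1403.2807 — 9 statements merged into one kernel-verified Lean document; each statement's English description precedes it below -/
import Mathlib

section
/- If Φ is an n×N complex matrix with N > n ≥ 1 all of whose columns have unit ℓ₂-norm, then MIP(Φ) ≥ √((N−n)/((N−1)n)). -/
/-! The off-diagonal entries of the Gram matrix `G = Φᴴ Φ` are the coherences and its diagonal
is `1`. `G` and `H = Φ Φᴴ` have the same Frobenius norm, since `tr G² = tr H²`, and `H` is an
`n × n` matrix of trace `N`, so Cauchy–Schwarz on its diagonal gives `‖G‖_F² ≥ N² / n`.
Removing the diagonal, the `N (N - 1)` squared off-diagonal coherences sum to at least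
`N² / n - N`, so the largest of them is at least the average `(N - n) / ((N - 1) n)`. -/

open scoped BigOperators

noncomputable def welch (n N : ℕ) : ℝ :=
  Real.sqrt (((N : ℝ) - n) / (((N : ℝ) - 1) * n))

/-- Normalised absolute inner product of columns `i` and `j` of `Φ`. -/
noncomputable def colCoh {m ι : Type*} [Fintype m] (Φ : Matrix m ι ℂ) (i j : ι) : ℝ :=
  ‖∑ r, (starRingEnd ℂ) (Φ r i) * Φ r j‖ /
    (Real.sqrt (∑ r, ‖Φ r i‖ ^ 2) * Real.sqrt (∑ r, ‖Φ r j‖ ^ 2))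

/-- `(ℓ₁,t)`-recoverability: every `t`-sparse `x` is the unique `ℓ₁`-minimizer among
solutions `z` of `Φ z = Φ x`. -/
def Recoverable {m ι : Type*} [Fintype m] [Fintype ι] [DecidableEq ι]
    (Φ : Matrix m ι ℂ) (t : ℕ) : Prop :=
  ∀ x : ι → ℂ, (Finset.univ.filter (fun i => x i ≠ 0)).card ≤ t →
    ∀ z : ι → ℂ, Φ.mulVec z = Φ.mulVec x → z ≠ x →
      ∑ i, ‖x i‖ < ∑ i, ‖z i‖

open Matrix Finset

section Gram

variable {𝕜 m ι : Type*} [RCLike 𝕜] [Fintype m]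

lemma Matrix.trace_mul_self_of_isHermitian {M : Matrix m m 𝕜} (hM : M.IsHermitian) :
    (M * M).trace = ((∑ i, ∑ j, ‖M i j‖ ^ 2 : ℝ) : 𝕜) := by
  simp only [trace, diag_apply, mul_apply]
  push_cast
  refine sum_congr rfl fun i _ => sum_congr rfl fun j _ => ?_
  rw [← hM.apply j i, RCLike.star_def, RCLike.mul_conj]

lemma Matrix.sum_norm_sq_conjTranspose_mul_self_eq [Fintype ι] (A : Matrix m ι 𝕜) :
    ∑ i, ∑ j, ‖(Aᴴ * A) i j‖ ^ 2 = ∑ k, ∑ l, ‖(A * Aᴴ) k l‖ ^ 2 := by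
  have htr : (Aᴴ * A * (Aᴴ * A)).trace = (A * Aᴴ * (A * Aᴴ)).trace := by
    rw [Matrix.mul_assoc, trace_mul_comm]
    simp only [Matrix.mul_assoc]
  rwa [trace_mul_self_of_isHermitian (isHermitian_conjTranspose_mul_self A),
    trace_mul_self_of_isHermitian (isHermitian_mul_conjTranspose_self A), RCLike.ofReal_inj] at htr

lemma Matrix.norm_trace_sq_le (M : Matrix m m 𝕜) :
    ‖M.trace‖ ^ 2 ≤ Fintype.card m * ∑ i, ∑ j, ‖M i j‖ ^ 2 :=
  calc ‖M.trace‖ ^ 2 ≤ (∑ i, ‖M i i‖) ^ 2 := by gcongr; exact norm_sum_le _ _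
    _ ≤ Fintype.card m * ∑ i, ‖M i i‖ ^ 2 := sq_sum_le_card_mul_sum_sq
    _ ≤ Fintype.card m * ∑ i, ∑ j, ‖M i j‖ ^ 2 := by
      gcongr with i
      exact single_le_sum (f := fun j => ‖M i j‖ ^ 2) (fun _ _ => by positivity) (mem_univ i)

lemma Matrix.conjTranspose_mul_self_apply_self (A : Matrix m ι 𝕜) (j : ι) :
    (Aᴴ * A) j j = ((∑ r, ‖A r j‖ ^ 2 : ℝ) : 𝕜) := by
  simp only [mul_apply, conjTranspose_apply]
  push_cast
  refine sum_congr rfl fun r _ => ?_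
  rw [RCLike.star_def, RCLike.conj_mul]

lemma Matrix.card_sq_div_sub_card_le_sum_offDiag [Fintype ι] [DecidableEq ι] (A : Matrix m ι 𝕜)
    (hunit : ∀ j, ∑ r, ‖A r j‖ ^ 2 = 1) :
    (Fintype.card ι : ℝ) ^ 2 / Fintype.card m - Fintype.card ι ≤
      ∑ p ∈ (univ : Finset ι).offDiag, ‖(Aᴴ * A) p.1 p.2‖ ^ 2 := by
  have hdiag (j : ι) : (Aᴴ * A) j j = 1 := by
    rw [conjTranspose_mul_self_apply_self, hunit, RCLike.ofReal_one]
  have htr : (A * Aᴴ).trace = Fintype.card ι := by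
    rw [trace_mul_comm]
    simp [trace, hdiag]
  have hsplit : ∑ i, ∑ j, ‖(Aᴴ * A) i j‖ ^ 2 =
      Fintype.card ι + ∑ p ∈ (univ : Finset ι).offDiag, ‖(Aᴴ * A) p.1 p.2‖ ^ 2 := by
    rw [← sum_product', ← diag_union_offDiag, sum_union (disjoint_diag_offDiag _), sum_diag]
    simp [hdiag]
  have hCS := norm_trace_sq_le (A * Aᴴ)
  rw [htr, RCLike.norm_natCast, ← sum_norm_sq_conjTranspose_mul_self_eq, hsplit] at hCS
  have := div_le_of_le_mul₀ (by positivity) (by positivity) ((mul_comm _ _).trans_ge hCS)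
  linarith

end Gram

lemma colCoh_eq_norm_conjTranspose_mul_self {m ι : Type*} [Fintype m] {Φ : Matrix m ι ℂ}
    (hunit : ∀ j, ∑ r, ‖Φ r j‖ ^ 2 = 1) (i j : ι) :
    colCoh Φ i j = ‖(Φᴴ * Φ) i j‖ := by
  rw [colCoh, hunit, hunit, Real.sqrt_one, one_mul, div_one]
  rfl

/-- Welch bound: an `n×N` matrix with unit-norm columns and `N > n ≥ 1` has
`MIP(Φ) ≥ √((N−n)/((N−1)n))`, i.e. some pair of distinct columns has coherence at
least the Welch bound. -/
theorem stmt_1 {n N : ℕ} (hn : 1 ≤ n) (hnN : n < N) (Φ : Matrix (Fin n) (Fin N) ℂ)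
    (hunit : ∀ j : Fin N, ∑ i, ‖Φ i j‖ ^ 2 = 1) :
    ∃ i j : Fin N, i ≠ j ∧ welch n N ≤ colCoh Φ i j := by
  set c : ℝ := ((N : ℝ) - n) / (((N : ℝ) - 1) * n) with hc
  have hn0 : (n : ℝ) ≠ 0 := Nat.cast_ne_zero.2 (by omega)
  have hN1 : (N : ℝ) - 1 ≠ 0 := by
    rw [sub_ne_zero, Nat.cast_ne_one]
    omega
  have hsum : ∑ _p ∈ (univ : Finset (Fin N)).offDiag, c = (N : ℝ) ^ 2 / n - N := by
    rw [sum_const, offDiag_card, card_univ, Fintype.card_fin, nsmul_eq_mul,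
      Nat.cast_sub (Nat.le_mul_self N), Nat.cast_mul, hc]
    field_simp
  have hne : (univ : Finset (Fin N)).offDiag.Nonempty :=
    ⟨(⟨0, by omega⟩, ⟨1, by omega⟩), by simp [Fin.ext_iff]⟩
  obtain ⟨⟨i, j⟩, hij, hle⟩ := exists_le_of_sum_le hne (hsum.trans_le (by
    simpa using card_sq_div_sub_card_le_sum_offDiag Φ hunit))
  refine ⟨i, j, (mem_offDiag.1 hij).2.2, ?_⟩
  rw [colCoh_eq_norm_conjTranspose_mul_self hunit, welch, ← Real.sqrt_sq (norm_nonneg _)]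
  exact Real.sqrt_le_sqrt hle
end

section
/- Let (V,ℬ) be a PBD(v,K,1) with 2 ≤ K_min, and let Φ be the n×N matrix of Construction con0. Then distinct rows of Φ are pairwise orthogonal; consequently, for any real c > 0, the matrix Φ' obtained from Φ by rescaling every row to have ℓ₂-norm c satisfies Φ'·(Φ')^* = c²·I_n (i.e., the columns of Φ' form a tight frame). -/
open scoped BigOperators

/-- `B` is the block set of a pairwise balanced design with index `λ = 1` and block
sizes in `K`: every block has cardinality in `K`, and every pair of distinct points
lies in exactly one block. -/
def IsPBD {V : Type*} [DecidableEq V] (B : Finset (Finset V)) (K : Finset ℕ) : Prop :=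
  (∀ b ∈ B, b.card ∈ K) ∧
  ∀ x y : V, x ≠ y → ∃! b : Finset V, b ∈ B ∧ x ∈ b ∧ y ∈ b

/-- The replication number of the point `x`: the number of blocks containing `x`. -/
def repl {V : Type*} [DecidableEq V] (B : Finset (Finset V)) (x : V) : ℕ :=
  (B.filter (fun b => x ∈ b)).card

/-- A complex Hadamard matrix of order `r`: all entries of modulus 1 and
`H Hᴴ = r·I`. -/
def IsComplexHadamard {r : ℕ} (H : Matrix (Fin r) (Fin r) ℂ) : Prop :=
  (∀ i j, ‖H i j‖ = 1) ∧ H * H.conjTranspose = (r : ℂ) • 1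

/-- Construction con0: rows indexed by blocks, columns indexed by pairs `(x,j)` with
`x ∈ V` and `j < r_x`; the entry in row `B` and column `(x,j)` is
`(1/√r_x)·(H_x)_{σ_x(B), j}` if `x ∈ B` and `0` otherwise. -/
noncomputable def con0 {V : Type*} [DecidableEq V] (B : Finset (Finset V))
    (H : ∀ x : V, Matrix (Fin (repl B x)) (Fin (repl B x)) ℂ)
    (σ : ∀ x : V, {b : Finset V // b ∈ B ∧ x ∈ b} → Fin (repl B x)) :
    Matrix {b : Finset V // b ∈ B} (Σ x : V, Fin (repl B x)) ℂ :=
  fun b c =>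
    if h : c.1 ∈ b.1 then
      ((Real.sqrt (repl B c.1))⁻¹ : ℝ) * H c.1 (σ c.1 ⟨b.1, b.2, h⟩) c.2
    else 0
section Aux

variable {V : Type*} [Fintype V] [DecidableEq V]

lemma repl_pos (B : Finset (Finset V)) {b : Finset V} (hb : b ∈ B) {x : V} (hx : x ∈ b) :
    0 < repl B x :=
  Finset.card_pos.mpr ⟨b, Finset.mem_filter.mpr ⟨hb, hx⟩⟩

lemma con0_rowNorm (B : Finset (Finset V))
    (H : ∀ x : V, Matrix (Fin (repl B x)) (Fin (repl B x)) ℂ)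
    (hH : ∀ x : V, IsComplexHadamard (H x))
    (σ : ∀ x : V, {b : Finset V // b ∈ B ∧ x ∈ b} → Fin (repl B x))
    (b : {b : Finset V // b ∈ B}) :
    ∑ k : Σ x : V, Fin (repl B x), ‖con0 B H σ b k‖ ^ 2 = (b.1.card : ℝ) := by
  rw [← Finset.univ_sigma_univ, Finset.sum_sigma]
  have key : ∀ x : V, (∑ j : Fin (repl B x), ‖con0 B H σ b ⟨x, j⟩‖ ^ 2)
      = if x ∈ b.1 then 1 else 0 := by
    intro x
    by_cases hx : x ∈ b.1
    · have hr : (0:ℝ) < (repl B x : ℝ) := by exact_mod_cast repl_pos B b.2 hx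
      simp only [con0, hx, dif_pos, if_pos]
      have hterm : ∀ j : Fin (repl B x),
          ‖(Complex.ofReal ((Real.sqrt (repl B x))⁻¹)) * H x (σ x ⟨b.1, b.2, hx⟩) j‖ ^ 2
            = ((repl B x : ℝ))⁻¹ := by
        intro j
        rw [norm_mul, (hH x).1, mul_one, Complex.norm_real, Real.norm_eq_abs,
          abs_of_nonneg (by positivity), inv_pow, Real.sq_sqrt hr.le]
      rw [Finset.sum_congr rfl fun j _ => hterm j, Finset.sum_const, Finset.card_univ,
        Fintype.card_fin, nsmul_eq_mul, mul_inv_cancel₀ hr.ne']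
    · simp [con0, hx]
  rw [Finset.sum_congr rfl fun x _ => key x]
  simp [Finset.sum_ite_mem]

lemma con0_inner (B : Finset (Finset V))
    (H : ∀ x : V, Matrix (Fin (repl B x)) (Fin (repl B x)) ℂ)
    (hH : ∀ x : V, IsComplexHadamard (H x))
    (σ : ∀ x : V, {b : Finset V // b ∈ B ∧ x ∈ b} → Fin (repl B x))
    (hσ : ∀ x : V, Function.Bijective (σ x))
    {b b' : {b : Finset V // b ∈ B}} (hne : b ≠ b') :
    ∑ j : Σ x : V, Fin (repl B x),
      (starRingEnd ℂ) (con0 B H σ b j) * con0 B H σ b' j = 0 := by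
  rw [← Finset.univ_sigma_univ, Finset.sum_sigma]
  refine Finset.sum_eq_zero fun x _ => ?_
  by_cases hx : x ∈ b.1
  · by_cases hx' : x ∈ b'.1
    · simp only [con0, hx, hx', dif_pos]
      set i := σ x ⟨b.1, b.2, hx⟩ with hi
      set i' := σ x ⟨b'.1, b'.2, hx'⟩ with hi'
      have hii : i' ≠ i := by
        intro h
        apply hne
        have := (hσ x).1 (hi'.symm.trans (h.trans hi))
        exact Subtype.ext (congrArg Subtype.val this).symm
      have hkey : ∑ j, (starRingEnd ℂ) (H x i j) * H x i' j = 0 := by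
        have h2 := congrFun (congrFun (hH x).2 i') i
        rw [Matrix.mul_apply] at h2
        simp only [Matrix.conjTranspose_apply, Matrix.smul_apply, Matrix.one_apply,
          if_neg hii, smul_zero] at h2
        rw [← h2]
        exact Finset.sum_congr rfl fun j _ => by rw [RCLike.star_def, mul_comm]
      calc (∑ j, (starRingEnd ℂ) ((Complex.ofReal ((Real.sqrt (repl B x))⁻¹)) * H x i j)
              * ((Complex.ofReal ((Real.sqrt (repl B x))⁻¹)) * H x i' j))
          = (Complex.ofReal ((Real.sqrt (repl B x))⁻¹)) ^ 2
              * ∑ j, (starRingEnd ℂ) (H x i j) * H x i' j := by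
            rw [Finset.mul_sum]
            refine Finset.sum_congr rfl fun j _ => ?_
            rw [map_mul, Complex.conj_ofReal]; ring
        _ = 0 := by rw [hkey, mul_zero]
    · simp [con0, hx']
  · simp [con0, hx]

end Aux

/-- Distinct rows of the matrix of Construction con0 are orthogonal; hence after
rescaling every row to have ℓ₂-norm `c > 0`, the resulting matrix `Φ'` satisfies
`Φ' Φ'ᴴ = c² I` (its columns form a tight frame). -/
theorem stmt_3 {V : Type*} [Fintype V] [DecidableEq V]
    (B : Finset (Finset V)) (K : Finset ℕ) (hKne : K.Nonempty)
    (hPBD : IsPBD B K) (hKmin : 2 ≤ K.min' hKne)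
    (H : ∀ x : V, Matrix (Fin (repl B x)) (Fin (repl B x)) ℂ)
    (hH : ∀ x : V, IsComplexHadamard (H x))
    (σ : ∀ x : V, {b : Finset V // b ∈ B ∧ x ∈ b} → Fin (repl B x))
    (hσ : ∀ x : V, Function.Bijective (σ x))
    (c : ℝ) (hc : 0 < c) :
    (∀ b b' : {b : Finset V // b ∈ B}, b ≠ b' →
        ∑ j : Σ x : V, Fin (repl B x),
          (starRingEnd ℂ) (con0 B H σ b j) * con0 B H σ b' j = 0) ∧
    (∀ Φ' : Matrix {b : Finset V // b ∈ B} (Σ x : V, Fin (repl B x)) ℂ,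
      (∀ b j, Φ' b j =
        (((c / Real.sqrt (∑ k : Σ x : V, Fin (repl B x), ‖con0 B H σ b k‖ ^ 2) : ℝ) : ℂ) *
          con0 B H σ b j)) →
      Φ' * Φ'.conjTranspose =
        ((c : ℂ) ^ 2) • (1 : Matrix {b : Finset V // b ∈ B} {b : Finset V // b ∈ B} ℂ)) := by
  refine ⟨fun b b' hne => con0_inner B H hH σ hσ hne, fun Φ' hΦ' => ?_⟩
  ext b b'
  have hcard : ∀ b : {b : Finset V // b ∈ B}, (0:ℝ) < (b.1.card : ℝ) := by
    intro b
    have h1 : b.1.card ∈ K := hPBD.1 b.1 b.2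
    have h2 : 2 ≤ b.1.card := le_trans hKmin (K.min'_le _ h1)
    exact_mod_cast lt_of_lt_of_le (by norm_num) h2
  rw [Matrix.mul_apply]
  simp only [Matrix.conjTranspose_apply, hΦ', RCLike.star_def, map_mul, Complex.conj_ofReal]
  by_cases hbb : b = b'
  · subst hbb
    have hS : ∑ k : Σ x : V, Fin (repl B x), ‖con0 B H σ b k‖ ^ 2 = (b.1.card : ℝ) :=
      con0_rowNorm B H hH σ b
    have hdiag : ∑ j : Σ x : V, Fin (repl B x),
        con0 B H σ b j * (starRingEnd ℂ) (con0 B H σ b j)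
          = ((b.1.card : ℝ) : ℂ) := by
      rw [← hS]
      push_cast
      refine Finset.sum_congr rfl fun j _ => ?_
      rw [Complex.mul_conj]
      norm_cast
      rw [Complex.normSq_eq_norm_sq]
    have : (∑ j : Σ x : V, Fin (repl B x),
        ((c / Real.sqrt (∑ k : Σ x : V, Fin (repl B x), ‖con0 B H σ b k‖ ^ 2) : ℝ) : ℂ) *
          con0 B H σ b j *
        (((c / Real.sqrt (∑ k : Σ x : V, Fin (repl B x), ‖con0 B H σ b k‖ ^ 2) : ℝ) : ℂ) *
          (starRingEnd ℂ) (con0 B H σ b j)))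
        = ((c / Real.sqrt (b.1.card) : ℝ) : ℂ) ^ 2 * ((b.1.card : ℝ) : ℂ) := by
      rw [← hdiag, Finset.mul_sum, hS]
      exact Finset.sum_congr rfl fun j _ => by ring
    rw [this]
    have hreal : (c / Real.sqrt (b.1.card)) ^ 2 * (b.1.card : ℝ) = c ^ 2 := by
      rw [div_pow, Real.sq_sqrt (hcard b).le, div_mul_cancel₀ _ (hcard b).ne']
    rw [Matrix.smul_apply, Matrix.one_apply_eq, smul_eq_mul, mul_one,
      ← Complex.ofReal_pow, ← Complex.ofReal_mul, hreal,
      Complex.ofReal_pow]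
  · have h0 := con0_inner B H hH σ hσ hbb
    have : ∑ j : Σ x : V, Fin (repl B x),
        con0 B H σ b j * (starRingEnd ℂ) (con0 B H σ b' j) = 0 := by
      have := congrArg (starRingEnd ℂ) h0
      rw [map_sum, map_zero] at this
      rw [← this]
      refine Finset.sum_congr rfl fun j _ => ?_
      rw [map_mul, RingHomInvPair.comp_apply_eq₂]
    calc (∑ j : Σ x : V, Fin (repl B x),
        ((c / Real.sqrt (∑ k : Σ x : V, Fin (repl B x), ‖con0 B H σ b k‖ ^ 2) : ℝ) : ℂ) *
          con0 B H σ b j *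
        (((c / Real.sqrt (∑ k : Σ x : V, Fin (repl B x), ‖con0 B H σ b' k‖ ^ 2) : ℝ) : ℂ) *
          (starRingEnd ℂ) (con0 B H σ b' j)))
        = ((c / Real.sqrt (∑ k : Σ x : V, Fin (repl B x), ‖con0 B H σ b k‖ ^ 2) : ℝ) : ℂ) *
          ((c / Real.sqrt (∑ k : Σ x : V, Fin (repl B x), ‖con0 B H σ b' k‖ ^ 2) : ℝ) : ℂ) *
          ∑ j : Σ x : V, Fin (repl B x),
            con0 B H σ b j * (starRingEnd ℂ) (con0 B H σ b' j) := by
          rw [Finset.mul_sum]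
          exact Finset.sum_congr rfl fun j _ => by ring
      _ = 0 := by rw [this, mul_zero]
      _ = ((c : ℂ) ^ 2 • (1 : Matrix {b : Finset V // b ∈ B} {b : Finset V // b ∈ B} ℂ)) b b' := by
          rw [Matrix.smul_apply, Matrix.one_apply_ne hbb, smul_zero]
end

section
/- Let (V,ℬ) be a PBD(v,K,1) with 2 ≤ K_min and K_max ≤ √2·(K_min−1), let n = |ℬ| and N = Σ_{x∈V} r_x, and assume 2n−1 ≤ N. Then the matrix Φ of Construction con0 is 1-equiangular; in particular every pair of distinct columns c_i, c_j of Φ satisfies |⟨c_i,c_j⟩|/(‖c_i‖₂‖c_j‖₂) ≤ 2·μ_{n,N}. -/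
open scoped BigOperators

section Aux
variable {V : Type*} [DecidableEq V]

lemma pbd_unique_block {B : Finset (Finset V)} {K : Finset ℕ} (h : IsPBD B K)
    {x y : V} (hxy : x ≠ y) {b1 b2 : Finset V} (h1 : b1 ∈ B) (h2 : b2 ∈ B)
    (hx1 : x ∈ b1) (hy1 : y ∈ b1) (hx2 : x ∈ b2) (hy2 : y ∈ b2) : b1 = b2 := by
  obtain ⟨b, -, hu⟩ := h.2 x y hxy
  rw [hu b1 ⟨h1, hx1, hy1⟩, hu b2 ⟨h2, hx2, hy2⟩]

lemma pbd_point_count [Fintype V] {B : Finset (Finset V)} {K : Finset ℕ} (h : IsPBD B K) (x : V) :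
    ∑ b ∈ B.filter (fun b => x ∈ b), (b.card - 1) = Fintype.card V - 1 := by
  have hdisj : ∀ b1 ∈ B.filter (fun b => x ∈ b), ∀ b2 ∈ B.filter (fun b => x ∈ b),
      b1 ≠ b2 → Disjoint (b1.erase x) (b2.erase x) := by
    intro b1 hb1 b2 hb2 hne
    rw [Finset.mem_filter] at hb1 hb2
    rw [Finset.disjoint_left]
    intro y hy1 hy2
    rw [Finset.mem_erase] at hy1 hy2
    exact hne (pbd_unique_block h (Ne.symm hy1.1) hb1.1 hb2.1 hb1.2 hy1.2 hb2.2 hy2.2)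
  have key : (B.filter (fun b => x ∈ b)).biUnion (fun b => b.erase x) = Finset.univ.erase x := by
    ext y
    simp only [Finset.mem_biUnion, Finset.mem_filter, Finset.mem_erase, Finset.mem_univ, and_true]
    constructor
    · rintro ⟨b, ⟨_, _⟩, hy, _⟩
      exact hy
    · intro hy
      obtain ⟨b, ⟨hb, hxb, hyb⟩, -⟩ := h.2 x y (Ne.symm hy)
      exact ⟨b, ⟨hb, hxb⟩, hy, hyb⟩
  calc ∑ b ∈ B.filter (fun b => x ∈ b), (b.card - 1)
      = ∑ b ∈ B.filter (fun b => x ∈ b), (b.erase x).card := by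
        refine Finset.sum_congr rfl fun b hb => ?_
        rw [Finset.card_erase_of_mem (Finset.mem_filter.mp hb).2]
    _ = ((B.filter (fun b => x ∈ b)).biUnion (fun b => b.erase x)).card :=
        (Finset.card_biUnion hdisj).symm
    _ = (Finset.univ.erase x).card := by rw [key]
    _ = Fintype.card V - 1 := by
        rw [Finset.card_erase_of_mem (Finset.mem_univ x), Finset.card_univ]

lemma pbd_pair_count [Fintype V] {B : Finset (Finset V)} {K : Finset ℕ} (h : IsPBD B K) :
    ∑ b ∈ B, b.card * (b.card - 1) = Fintype.card V * (Fintype.card V - 1) := by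
  have hdisj : ∀ b1 ∈ B, ∀ b2 ∈ B, b1 ≠ b2 → Disjoint b1.offDiag b2.offDiag := by
    intro b1 hb1 b2 hb2 hne
    rw [Finset.disjoint_left]
    intro p hp1 hp2
    rw [Finset.mem_offDiag] at hp1 hp2
    exact hne (pbd_unique_block h hp1.2.2 hb1 hb2 hp1.1 hp1.2.1 hp2.1 hp2.2.1)
  have key : B.biUnion (fun b => b.offDiag) = (Finset.univ : Finset V).offDiag := by
    ext p
    simp only [Finset.mem_biUnion, Finset.mem_offDiag, Finset.mem_univ, true_and]
    constructor
    · rintro ⟨b, _, _, _, hne⟩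
      exact hne
    · intro hne
      obtain ⟨b, ⟨hb, hxb, hyb⟩, -⟩ := h.2 p.1 p.2 hne
      exact ⟨b, hb, hxb, hyb, hne⟩
  have hc : ∀ s : Finset V, s.offDiag.card = s.card * (s.card - 1) := by
    intro s
    rw [Finset.offDiag_card, Nat.mul_sub, Nat.mul_one]
  calc ∑ b ∈ B, b.card * (b.card - 1)
      = ∑ b ∈ B, b.offDiag.card := by
        exact Finset.sum_congr rfl fun b _ => (hc b).symm
    _ = (B.biUnion (fun b => b.offDiag)).card := (Finset.card_biUnion hdisj).symm
    _ = (Finset.univ : Finset V).offDiag.card := by rw [key]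
    _ = Fintype.card V * (Fintype.card V - 1) := by rw [hc, Finset.card_univ]

lemma sum_over_blocks [Fintype V] (B : Finset (Finset V)) (x : V)
    {M : Type*} [AddCommMonoid M]
    (g : {b : Finset V // b ∈ B ∧ x ∈ b} → M) :
    ∑ b : {b : Finset V // b ∈ B}, (if h : x ∈ b.1 then g ⟨b.1, b.2, h⟩ else 0) =
      ∑ b' : {b : Finset V // b ∈ B ∧ x ∈ b}, g b' := by
  rw [← Finset.sum_filter_of_ne (p := fun b : {b : Finset V // b ∈ B} => x ∈ b.1)
    (fun b _ hb => by by_contra h; rw [dif_neg h] at hb; exact hb rfl)]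
  refine Finset.sum_bij' (fun b hb => (⟨b.1, b.2, (Finset.mem_filter.mp hb).2⟩ :
      {b : Finset V // b ∈ B ∧ x ∈ b}))
    (fun b' _ => ⟨b'.1, b'.2.1⟩) ?_ ?_ ?_ ?_ ?_
  · intro b hb; exact Finset.mem_univ _
  · intro b' _
    exact Finset.mem_filter.mpr ⟨Finset.mem_univ _, b'.2.2⟩
  · intro b hb; rfl
  · intro b' _; rfl
  · intro b hb
    rw [dif_pos (Finset.mem_filter.mp hb).2]

lemma con0_colnorm [Fintype V] (B : Finset (Finset V))
    (H : ∀ x : V, Matrix (Fin (repl B x)) (Fin (repl B x)) ℂ)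
    (hH : ∀ x : V, IsComplexHadamard (H x))
    (σ : ∀ x : V, {b : Finset V // b ∈ B ∧ x ∈ b} → Fin (repl B x))
    (x : V) (jx : Fin (repl B x)) :
    ∑ b : {b : Finset V // b ∈ B}, ‖con0 B H σ b ⟨x, jx⟩‖ ^ 2 = 1 := by
  have hr : 0 < repl B x := jx.pos
  have h1 : ∀ b : {b : Finset V // b ∈ B}, ‖con0 B H σ b ⟨x, jx⟩‖ ^ 2 =
      if x ∈ b.1 then ((repl B x : ℝ))⁻¹ else 0 := by
    intro b
    simp only [con0]
    split_ifs with h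
    · rw [norm_mul, Complex.norm_real, (hH x).1, mul_one, Real.norm_eq_abs,
        abs_of_nonneg (inv_nonneg.mpr (Real.sqrt_nonneg _)), inv_pow,
        Real.sq_sqrt (Nat.cast_nonneg _)]
    · simp
  rw [Finset.sum_congr rfl (fun b _ => h1 b)]
  have h2 : ∀ b : {b : Finset V // b ∈ B},
      (if x ∈ b.1 then ((repl B x : ℝ))⁻¹ else 0) =
      (if h : x ∈ b.1 then (fun _ : {b : Finset V // b ∈ B ∧ x ∈ b} =>
        ((repl B x : ℝ))⁻¹) ⟨b.1, b.2, h⟩ else 0) := by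
    intro b; split_ifs <;> rfl
  rw [Finset.sum_congr rfl (fun b _ => h2 b), sum_over_blocks B x (fun _ => ((repl B x : ℝ))⁻¹)]
  rw [Finset.sum_const, Finset.card_univ]
  have hcard : Fintype.card {b : Finset V // b ∈ B ∧ x ∈ b} = repl B x := by
    rw [Fintype.card_subtype]
    congr 1
    ext b
    simp [Finset.mem_filter]
  rw [hcard, nsmul_eq_mul, mul_inv_cancel₀]
  exact_mod_cast hr.ne'

lemma hadamard_comm {r : ℕ} (hr : 0 < r) {H : Matrix (Fin r) (Fin r) ℂ}
    (hH : IsComplexHadamard H) : H.conjTranspose * H = (r : ℂ) • 1 := by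
  have hr0 : (r : ℂ) ≠ 0 := Nat.cast_ne_zero.mpr hr.ne'
  have h1 : H * ((r : ℂ)⁻¹ • H.conjTranspose) = 1 := by
    rw [Matrix.mul_smul, hH.2, smul_smul, inv_mul_cancel₀ hr0, one_smul]
  have h2 := mul_eq_one_comm.mp h1
  rw [Matrix.smul_mul] at h2
  calc H.conjTranspose * H = (r:ℂ) • ((r:ℂ)⁻¹ • (H.conjTranspose * H)) := by
        rw [smul_smul, mul_inv_cancel₀ hr0, one_smul]
    _ = (r:ℂ) • 1 := by rw [h2]

lemma con0_inner_same [Fintype V] (B : Finset (Finset V))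
    (H : ∀ x : V, Matrix (Fin (repl B x)) (Fin (repl B x)) ℂ)
    (hH : ∀ x : V, IsComplexHadamard (H x))
    (σ : ∀ x : V, {b : Finset V // b ∈ B ∧ x ∈ b} → Fin (repl B x))
    (hσ : ∀ x : V, Function.Bijective (σ x))
    (x : V) (jx jy : Fin (repl B x)) (hj : jx ≠ jy) :
    ∑ b : {b : Finset V // b ∈ B},
      (starRingEnd ℂ) (con0 B H σ b ⟨x, jx⟩) * con0 B H σ b ⟨x, jy⟩ = 0 := by
  set c : ℂ := (((Real.sqrt (repl B x))⁻¹ : ℝ) : ℂ) with hc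
  have step : ∀ b : {b : Finset V // b ∈ B},
      (starRingEnd ℂ) (con0 B H σ b ⟨x, jx⟩) * con0 B H σ b ⟨x, jy⟩
      = if h : x ∈ b.1 then (fun b' : {b : Finset V // b ∈ B ∧ x ∈ b} =>
          (starRingEnd ℂ) (c * H x (σ x b') jx) * (c * H x (σ x b') jy)) ⟨b.1, b.2, h⟩
        else 0 := by
    intro b
    simp only [con0]
    split_ifs with h
    · rfl
    · simp
  rw [Finset.sum_congr rfl (fun b _ => step b), sum_over_blocks B x
    (fun b' : {b : Finset V // b ∈ B ∧ x ∈ b} =>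
      (starRingEnd ℂ) (c * H x (σ x b') jx) * (c * H x (σ x b') jy))]
  rw [Fintype.sum_bijective (σ x) (hσ x) _
    (fun i => (starRingEnd ℂ) (c * H x i jx) * (c * H x i jy)) (fun b' => rfl)]
  have expand : ∀ i : Fin (repl B x),
      (starRingEnd ℂ) (c * H x i jx) * (c * H x i jy)
      = ((starRingEnd ℂ) c * c) * ((starRingEnd ℂ) (H x i jx) * H x i jy) := by
    intro i
    rw [map_mul]
    ring
  rw [Finset.sum_congr rfl (fun i _ => expand i), ← Finset.mul_sum]
  have hsum : ∑ i : Fin (repl B x), (starRingEnd ℂ) (H x i jx) * H x i jy = 0 := by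
    have h0 : ((H x).conjTranspose * H x) jx jy = 0 := by
      rw [hadamard_comm jx.pos (hH x), Matrix.smul_apply, Matrix.one_apply_ne hj,
        smul_zero]
    rw [← h0, Matrix.mul_apply]
    exact Finset.sum_congr rfl fun i _ => by rw [Matrix.conjTranspose_apply]; rfl
  rw [hsum, mul_zero]

lemma con0_inner_ne [Fintype V] (B : Finset (Finset V)) {K : Finset ℕ} (hPBD : IsPBD B K)
    (H : ∀ x : V, Matrix (Fin (repl B x)) (Fin (repl B x)) ℂ)
    (hH : ∀ x : V, IsComplexHadamard (H x))
    (σ : ∀ x : V, {b : Finset V // b ∈ B ∧ x ∈ b} → Fin (repl B x))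
    (x y : V) (hxy : x ≠ y) (jx : Fin (repl B x)) (jy : Fin (repl B y)) :
    ‖∑ b : {b : Finset V // b ∈ B},
      (starRingEnd ℂ) (con0 B H σ b ⟨x, jx⟩) * con0 B H σ b ⟨y, jy⟩‖ =
      (Real.sqrt (repl B x))⁻¹ * (Real.sqrt (repl B y))⁻¹ := by
  obtain ⟨b0, ⟨hb0B, hxb0, hyb0⟩, -⟩ := hPBD.2 x y hxy
  have hmain : ∑ b : {b : Finset V // b ∈ B},
      (starRingEnd ℂ) (con0 B H σ b ⟨x, jx⟩) * con0 B H σ b ⟨y, jy⟩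
      = (starRingEnd ℂ) (con0 B H σ ⟨b0, hb0B⟩ ⟨x, jx⟩) * con0 B H σ ⟨b0, hb0B⟩ ⟨y, jy⟩ := by
    refine Finset.sum_eq_single_of_mem (⟨b0, hb0B⟩ : {b : Finset V // b ∈ B})
      (Finset.mem_univ _) ?_
    intro b _ hb
    by_cases hx : x ∈ b.1
    · by_cases hy : y ∈ b.1
      · exact absurd (Subtype.ext (pbd_unique_block hPBD hxy b.2 hb0B hx hy hxb0 hyb0)) hb
      · simp only [con0]
        rw [dif_neg hy, mul_zero]
    · simp only [con0]
      rw [dif_neg hx, map_zero, zero_mul]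
  rw [hmain]
  simp only [con0]
  rw [dif_pos hxb0, dif_pos hyb0, norm_mul, RCLike.norm_conj, norm_mul, norm_mul,
    Complex.norm_real, Complex.norm_real, (hH x).1, (hH y).1, mul_one, mul_one,
    Real.norm_eq_abs, Real.norm_eq_abs, abs_of_nonneg (inv_nonneg.mpr (Real.sqrt_nonneg _)),
    abs_of_nonneg (inv_nonneg.mpr (Real.sqrt_nonneg _))]

lemma key_arith {n v rx ry m M s : ℝ}
    (hs2 : s ^ 2 = 2) (hs1 : 1 ≤ s)
    (hm2 : 2 ≤ m) (hM2 : 2 ≤ M) (hMs : M ≤ s * (m - 1))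
    (hvm : m ≤ v)
    (h1 : v - 1 ≤ rx * (M - 1)) (h2 : v - 1 ≤ ry * (M - 1))
    (h3 : n * (m * (m - 1)) ≤ v * (v - 1)) :
    n ≤ 2 * rx * ry := by
  have ha1 : 1 ≤ m - 1 := by linarith
  have hv1 : (0:ℝ) ≤ v - 1 := by linarith
  have step1 : (M - 1) ^ 2 ≤ 2 * (m-1)^2 - 2 * s * (m-1) + 1 := by
    nlinarith [mul_nonneg (sub_nonneg.2 hMs) (by nlinarith : (0:ℝ) ≤ s * (m-1) + M - 2)]
  have step2 : v * ((M - 1) ^ 2) ≤ 2 * (v - 1) * (m * (m - 1)) := by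
    nlinarith [mul_le_mul_of_nonneg_left step1 (by linarith : (0:ℝ) ≤ v),
      mul_nonneg (by linarith : (0:ℝ) ≤ m - 1) (by linarith : (0:ℝ) ≤ v - m),
      mul_nonneg (mul_nonneg (by linarith : (0:ℝ) ≤ v) (by linarith : (0:ℝ) ≤ m - 1))
        (by linarith : (0:ℝ) ≤ s - 1),
      mul_nonneg (by linarith : (0:ℝ) ≤ v) (by linarith : (0:ℝ) ≤ m - 2)]
  have c5 : (v - 1) * (v - 1) ≤ (rx * (M - 1)) * (ry * (M - 1)) :=
    mul_le_mul h1 h2 hv1 (le_trans hv1 h1)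
  have hcpos : (0:ℝ) < (m * (m - 1)) * ((M - 1) ^ 2) := by nlinarith
  have key : n * ((m * (m - 1)) * ((M - 1) ^ 2)) ≤ (2 * rx * ry) * ((m * (m - 1)) * ((M - 1) ^ 2)) := by
    calc n * ((m * (m - 1)) * ((M - 1) ^ 2)) = (n * (m * (m-1))) * (M-1)^2 := by ring
      _ ≤ (v * (v - 1)) * (M - 1)^2 := mul_le_mul_of_nonneg_right h3 (sq_nonneg _)
      _ = (v - 1) * (v * ((M - 1)^2)) := by ring
      _ ≤ (v - 1) * (2 * (v - 1) * (m * (m - 1))) := mul_le_mul_of_nonneg_left step2 hv1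
      _ = 2 * ((v-1) * (v-1)) * (m * (m-1)) := by ring
      _ ≤ 2 * ((rx * (M - 1)) * (ry * (M - 1))) * (m * (m-1)) := by
          have hmm : (0:ℝ) ≤ m * (m - 1) := by nlinarith
          nlinarith [mul_le_mul_of_nonneg_right c5 hmm]
      _ = (2 * rx * ry) * ((m * (m - 1)) * ((M - 1) ^ 2)) := by ring
  exact le_of_mul_le_mul_right key hcpos

lemma welch_step {n N rx ry : ℝ} (hn : 1 ≤ n) (hN2 : 2 ≤ N)
    (h2n : 2 * n - 1 ≤ N) (hrx : 1 ≤ rx) (hry : 1 ≤ ry)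
    (hkey : n ≤ 2 * rx * ry) :
    (Real.sqrt rx)⁻¹ * (Real.sqrt ry)⁻¹ ≤
      2 * Real.sqrt ((N - n) / ((N - 1) * n)) := by
  have hrx0 : (0:ℝ) < rx := by linarith
  have hry0 : (0:ℝ) < ry := by linarith
  have hL : (Real.sqrt rx)⁻¹ * (Real.sqrt ry)⁻¹ = Real.sqrt ((rx * ry)⁻¹) := by
    rw [Real.sqrt_inv, Real.sqrt_mul hrx0.le, mul_inv]
  have h4 : Real.sqrt 4 = 2 := by
    rw [show (4:ℝ) = 2 ^ 2 by norm_num, Real.sqrt_sq (by norm_num : (0:ℝ) ≤ 2)]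
  have hR : 2 * Real.sqrt ((N - n) / ((N - 1) * n)) =
      Real.sqrt (4 * ((N - n) / ((N - 1) * n))) := by
    rw [Real.sqrt_mul (by norm_num : (0:ℝ) ≤ 4), h4]
  rw [hL, hR]
  apply Real.sqrt_le_sqrt
  have hnum : (0:ℝ) ≤ N - n := by linarith
  have hden : (0:ℝ) < (N - 1) * n := by nlinarith
  rw [mul_div_assoc', le_div_iff₀ hden]
  have hprod : (0:ℝ) < rx * ry := by positivity
  rw [inv_mul_le_iff₀ hprod]
  nlinarith [mul_nonneg hnum (by linarith : (0:ℝ) ≤ 2 * rx * ry - n),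
    mul_nonneg (by linarith : (0:ℝ) ≤ n) (by linarith : (0:ℝ) ≤ N - 2 * n + 1)]

end Aux

/-- If `(V,ℬ)` is a `PBD(v,K,1)` with `2 ≤ K_min`, `K_max ≤ √2 (K_min − 1)` and
`2n − 1 ≤ N` (where `n = |ℬ|`, `N = Σ_x r_x`), then the matrix of Construction con0
is 1-equiangular: every pair of distinct columns `c_i, c_j` satisfies
`(1−1)·μ_{n,N} ≤ |⟨c_i,c_j⟩|/(‖c_i‖‖c_j‖) ≤ (1+1)·μ_{n,N} = 2·μ_{n,N}`. -/
theorem stmt_4 {V : Type*} [Fintype V] [DecidableEq V]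
    (B : Finset (Finset V)) (K : Finset ℕ) (hKne : K.Nonempty)
    (hPBD : IsPBD B K) (hKmin : 2 ≤ K.min' hKne)
    (hKmax : (K.max' hKne : ℝ) ≤ Real.sqrt 2 * ((K.min' hKne : ℝ) - 1))
    (hnN : 2 * B.card - 1 ≤ ∑ x : V, repl B x)
    (H : ∀ x : V, Matrix (Fin (repl B x)) (Fin (repl B x)) ℂ)
    (hH : ∀ x : V, IsComplexHadamard (H x))
    (σ : ∀ x : V, {b : Finset V // b ∈ B ∧ x ∈ b} → Fin (repl B x))
    (hσ : ∀ x : V, Function.Bijective (σ x)) :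
    ∀ i j : Σ x : V, Fin (repl B x), i ≠ j →
      (1 - 1 : ℝ) * welch B.card (∑ x : V, repl B x) ≤ colCoh (con0 B H σ) i j ∧
      colCoh (con0 B H σ) i j ≤ 2 * welch B.card (∑ x : V, repl B x) := by
  intro i j hij
  obtain ⟨x, jx⟩ := i
  obtain ⟨y, jy⟩ := j
  have hlow : (0:ℝ) ≤ colCoh (con0 B H σ) ⟨x, jx⟩ ⟨y, jy⟩ :=
    div_nonneg (norm_nonneg _) (mul_nonneg (Real.sqrt_nonneg _) (Real.sqrt_nonneg _))
  have hwelch0 : 0 ≤ welch B.card (∑ x : V, repl B x) := Real.sqrt_nonneg _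
  refine ⟨by simpa using hlow, ?_⟩
  by_cases hxy : x = y
  · subst hxy
    have hj : jx ≠ jy := fun h => hij (by rw [h])
    unfold colCoh
    rw [con0_inner_same B H hH σ hσ x jx jy hj]
    simp only [norm_zero, zero_div]
    exact mul_nonneg (by norm_num) hwelch0
  · -- distinct points
    set m := K.min' hKne with hm
    set M := K.max' hKne with hMdef
    set v := Fintype.card V with hvdef
    set n := B.card with hndef
    set N := ∑ x : V, repl B x with hNdef
    have hrx : 0 < repl B x := jx.pos
    have hry : 0 < repl B y := jy.pos
    obtain ⟨bx, hbx⟩ := Finset.card_pos.mp hrx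
    rw [Finset.mem_filter] at hbx
    have hM2 : 2 ≤ M := le_trans hKmin (K.min'_le _ (K.max'_mem hKne))
    have hvm : m ≤ v := by
      calc m ≤ bx.card := K.min'_le _ (hPBD.1 bx hbx.1)
        _ ≤ v := Finset.card_le_univ bx
    have h1v : 1 ≤ v := by omega
    have h1M : 1 ≤ M := by omega
    have h1m : 1 ≤ m := by omega
    have hn1 : 1 ≤ n := Finset.card_pos.mpr ⟨bx, hbx.1⟩
    -- point counting for x and y
    have hpoint : ∀ z : V, v - 1 ≤ repl B z * (M - 1) := by
      intro z
      have hc := pbd_point_count hPBD z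
      calc v - 1 = ∑ b ∈ B.filter (fun b => z ∈ b), (b.card - 1) := hc.symm
        _ ≤ ∑ _b ∈ B.filter (fun b => z ∈ b), (M - 1) := by
            refine Finset.sum_le_sum fun b hb => ?_
            exact Nat.sub_le_sub_right (K.le_max' _ (hPBD.1 b (Finset.mem_filter.mp hb).1)) 1
        _ = repl B z * (M - 1) := by rw [Finset.sum_const, smul_eq_mul]; rfl
    -- pair counting
    have hpair : n * (m * (m - 1)) ≤ v * (v - 1) := by
      have hc := pbd_pair_count hPBD
      calc n * (m * (m - 1)) = ∑ _b ∈ B, m * (m - 1) := by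
            rw [Finset.sum_const, smul_eq_mul]
        _ ≤ ∑ b ∈ B, b.card * (b.card - 1) := by
            refine Finset.sum_le_sum fun b hb => ?_
            have hbm : m ≤ b.card := K.min'_le _ (hPBD.1 b hb)
            exact Nat.mul_le_mul hbm (Nat.sub_le_sub_right hbm 1)
        _ = v * (v - 1) := hc
    -- cast everything to ℝ
    have cast_le : ∀ {a b : ℕ}, a ≤ b → ((a:ℝ) ≤ (b:ℝ)) := fun h => Nat.cast_le.mpr h
    have h1' : (v:ℝ) - 1 ≤ (repl B x : ℝ) * ((M:ℝ) - 1) := by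
      have := cast_le (hpoint x)
      rwa [Nat.cast_sub h1v, Nat.cast_mul, Nat.cast_sub h1M, Nat.cast_one] at this
    have h2' : (v:ℝ) - 1 ≤ (repl B y : ℝ) * ((M:ℝ) - 1) := by
      have := cast_le (hpoint y)
      rwa [Nat.cast_sub h1v, Nat.cast_mul, Nat.cast_sub h1M, Nat.cast_one] at this
    have h3' : (n:ℝ) * ((m:ℝ) * ((m:ℝ) - 1)) ≤ (v:ℝ) * ((v:ℝ) - 1) := by
      have := cast_le hpair
      rwa [Nat.cast_mul, Nat.cast_mul, Nat.cast_sub h1m, Nat.cast_mul,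
        Nat.cast_sub h1v, Nat.cast_one] at this
    have hs2 : (Real.sqrt 2) ^ 2 = 2 := Real.sq_sqrt (by norm_num)
    have hs1 : 1 ≤ Real.sqrt 2 := by
      nlinarith [Real.sqrt_nonneg 2]
    have hkey : (n:ℝ) ≤ 2 * (repl B x : ℝ) * (repl B y : ℝ) :=
      key_arith hs2 hs1 (by exact_mod_cast hKmin) (by exact_mod_cast hM2) hKmax
        (by exact_mod_cast hvm) h1' h2' h3'
    -- N facts
    have hNxy : repl B x + repl B y ≤ N := by
      rw [hNdef, ← Finset.sum_pair hxy]
      exact Finset.sum_le_sum_of_subset (Finset.subset_univ _)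
    have hN2 : (2:ℝ) ≤ N := by
      have : 2 ≤ N := by omega
      exact_mod_cast this
    have h2n' : 2 * (n:ℝ) - 1 ≤ N := by
      have h : 2 * n ≤ N + 1 := by omega
      have := cast_le h
      push_cast at this
      linarith
    have hws := welch_step (by exact_mod_cast hn1) hN2 h2n'
      (by exact_mod_cast hrx) (by exact_mod_cast hry) hkey
    -- compute colCoh
    unfold colCoh
    rw [con0_colnorm B H hH σ x jx, con0_colnorm B H hH σ y jy, Real.sqrt_one, mul_one,
      div_one, con0_inner_ne B hPBD H hH σ x y hxy jx jy]
    unfold welch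
    exact hws
end

section
/- Let K_min, K_max, v, n, N be positive integers with 2 ≤ K_min, K_max ≤ √2·(K_min−1), K_max < v, n ≤ v(v−1)/(K_min(K_min−1)), n < N, and 2n−1 ≤ N. Then μ_{n,N} = √((N−n)/((N−1)n)) ≥ (1/2)·K_max/(v−1). -/
open scoped BigOperators

/-- If `2 ≤ K_min`, `K_max ≤ √2 (K_min − 1)`, `K_max < v`,
`n ≤ v(v−1)/(K_min(K_min−1))`, `n < N` and `2n − 1 ≤ N`, then
`μ_{n,N} ≥ (1/2)·K_max/(v−1)`. -/
theorem stmt_8 (Kmin Kmax v n N : ℕ)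
    (hKminpos : 0 < Kmin) (hKmaxpos : 0 < Kmax) (hvpos : 0 < v) (hnpos : 0 < n)
    (hNpos : 0 < N)
    (h0 : 2 ≤ Kmin)
    (h1 : (Kmax : ℝ) ≤ Real.sqrt 2 * ((Kmin : ℝ) - 1))
    (h2 : Kmax < v)
    (h3 : (n : ℝ) ≤ (v : ℝ) * ((v : ℝ) - 1) / ((Kmin : ℝ) * ((Kmin : ℝ) - 1)))
    (h4 : n < N) (h5 : 2 * n - 1 ≤ N) :
    (1 / 2 : ℝ) * ((Kmax : ℝ) / ((v : ℝ) - 1)) ≤ welch n N := by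
  have hKm2 : (2:ℝ) ≤ (Kmin:ℝ) := by exact_mod_cast h0
  have hn1 : (1:ℝ) ≤ (n:ℝ) := by exact_mod_cast hnpos
  have hKmax1 : (1:ℝ) ≤ (Kmax:ℝ) := by exact_mod_cast hKmaxpos
  have hKd : (0:ℝ) < (Kmin:ℝ) * ((Kmin:ℝ) - 1) := by nlinarith
  have hnK : (n:ℝ) * ((Kmin:ℝ) * ((Kmin:ℝ) - 1)) ≤ (v:ℝ) * ((v:ℝ) - 1) := by
    have := (le_div_iff₀ hKd).mp h3
    linarith
  have hvK : (Kmax:ℝ) + 1 ≤ (v:ℝ) := by exact_mod_cast h2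
  have hv2 : (2:ℝ) ≤ (v:ℝ) := by linarith
  have hKv : (Kmin:ℝ) ≤ (v:ℝ) := by
    by_contra h
    push_neg at h
    have : v < Kmin := by exact_mod_cast h
    have : (v:ℝ) + 1 ≤ (Kmin:ℝ) := by exact_mod_cast this
    nlinarith
  have hKmaxsq : (Kmax:ℝ)^2 ≤ 2 * ((Kmin:ℝ) - 1)^2 := by
    have hs : Real.sqrt 2 ^ 2 = 2 := Real.sq_sqrt (by norm_num)
    nlinarith [Real.sqrt_nonneg 2, h1]
  have hkey : 2 * (n:ℝ) * (Kmax:ℝ)^2 ≤ 4 * ((v:ℝ) - 1)^2 := by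
    nlinarith [mul_le_mul_of_nonneg_right hnK (by linarith : (0:ℝ) ≤ (Kmin:ℝ) - 1),
      mul_nonneg (by linarith : (0:ℝ) ≤ (v:ℝ) - 1) (by linarith : (0:ℝ) ≤ (v:ℝ) - (Kmin:ℝ)),
      mul_le_mul_of_nonneg_left hKmaxsq (by linarith : (0:ℝ) ≤ (n:ℝ))]
  have h2n : (2:ℝ) * n ≤ (N:ℝ) + 1 := by
    have : 2 * n ≤ N + 1 := by omega
    exact_mod_cast this
  have hnN : (n:ℝ) + 1 ≤ (N:ℝ) := by exact_mod_cast h4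
  have hden : (0:ℝ) < ((N:ℝ) - 1) * (n:ℝ) := by nlinarith
  have hv1 : (0:ℝ) < (v:ℝ) - 1 := by linarith
  rw [welch, Real.le_sqrt (by positivity)]
  have heq : ((1:ℝ)/2 * ((Kmax:ℝ)/((v:ℝ)-1)))^2 = (Kmax:ℝ)^2 / (4 * ((v:ℝ)-1)^2) := by
    field_simp; ring
  rw [heq, div_le_div_iff₀ (by positivity) hden]
  have hp : (0:ℝ) ≤ (n:ℝ) * ((N:ℝ) + 1 - 2*n) :=
    mul_nonneg (by linarith) (by linarith)
  have e1 : ((N:ℝ) - 1) * n ≤ 2 * n * ((N:ℝ) - n) := by linarith [hp]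
  have hA := mul_le_mul_of_nonneg_left e1 (by positivity : (0:ℝ) ≤ (Kmax:ℝ)^2)
  have hB := mul_le_mul_of_nonneg_right hkey (by linarith : (0:ℝ) ≤ (N:ℝ) - (n:ℝ))
  linarith [hA, hB]

  exact div_nonneg (by linarith) hden.le
end

section
/- Let (V,ℬ) be a PBD(v,K,1) with v ≥ 2 and 2 ≤ K_min, and let Φ be the matrix of Construction con0. Then every column of Φ has unit ℓ₂-norm; any two distinct columns labelled by the same point of V are orthogonal; and any two columns labelled by distinct points x ≠ y satisfy (K_min−1)/(v−1) ≤ |⟨c_i,c_j⟩| ≤ (K_max−1)/(v−1). In particular MIP(Φ) ≤ (K_max−1)/(v−1). -/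
open scoped BigOperators

section Aux

variable {V : Type*} [DecidableEq V]

/-- Reindex a sum over all blocks, supported on blocks containing `x`, through `σ x`. -/
lemma key_sum {M : Type*} [AddCommMonoid M] (B : Finset (Finset V)) (x : V)
    (σx : {b : Finset V // b ∈ B ∧ x ∈ b} → Fin (repl B x)) (hσ : Function.Bijective σx)
    (f : {b : Finset V // b ∈ B} → M) (g : Fin (repl B x) → M)
    (hf : ∀ (b : {b : Finset V // b ∈ B}) (h : x ∈ b.1), f b = g (σx ⟨b.1, b.2, h⟩))
    (hf0 : ∀ b : {b : Finset V // b ∈ B}, x ∉ b.1 → f b = 0) :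
    ∑ b, f b = ∑ i, g i := by
  classical
  let e : {b : Finset V // b ∈ B ∧ x ∈ b} ≃ Fin (repl B x) := Equiv.ofBijective σx hσ
  have h1 : ∑ b : {b : Finset V // b ∈ B}, f b
      = ∑ b ∈ Finset.univ.filter (fun b : {b : Finset V // b ∈ B} => x ∈ b.1), f b := by
    refine (Finset.sum_filter_of_ne ?_).symm
    intro b _ hb
    by_contra hx
    exact hb (hf0 b hx)
  rw [h1]
  refine Finset.sum_bij'
    (i := fun (b : {b : Finset V // b ∈ B}) hb =>
      σx ⟨b.1, b.2, (Finset.mem_filter.mp hb).2⟩)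
    (j := fun (i : Fin (repl B x)) _ => (⟨(e.symm i).1, (e.symm i).2.1⟩ : {b : Finset V // b ∈ B}))
    ?_ ?_ ?_ ?_ ?_
  · intro a ha; exact Finset.mem_univ _
  · intro i _
    exact Finset.mem_filter.mpr ⟨Finset.mem_univ _, (e.symm i).2.2⟩
  · intro a ha
    have h2 : e.symm (σx ⟨a.1, a.2, (Finset.mem_filter.mp ha).2⟩)
        = ⟨a.1, a.2, (Finset.mem_filter.mp ha).2⟩ :=
      Equiv.ofBijective_symm_apply_apply σx hσ _
    apply Subtype.ext
    show (e.symm (σx ⟨a.1, a.2, (Finset.mem_filter.mp ha).2⟩)).1 = a.1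
    rw [h2]
  · intro i _
    exact e.apply_symm_apply i
  · intro a ha
    exact hf a (Finset.mem_filter.mp ha).2

/-- Columns of a complex Hadamard matrix are orthogonal. -/
lemma hadamard_col {r : ℕ} (hr : 0 < r) {H : Matrix (Fin r) (Fin r) ℂ}
    (hH : IsComplexHadamard H) (j j' : Fin r) (hjj : j ≠ j') :
    ∑ i, (starRingEnd ℂ) (H i j) * H i j' = 0 := by
  have hr' : (r : ℂ) ≠ 0 := Nat.cast_ne_zero.mpr hr.ne'
  have h1 : H * ((r : ℂ)⁻¹ • H.conjTranspose) = 1 := by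
    rw [Matrix.mul_smul, hH.2, smul_smul, inv_mul_cancel₀ hr', one_smul]
  have h3 := mul_eq_one_comm.mp h1
  have h4 : H.conjTranspose * H = (r : ℂ) • 1 := by
    calc H.conjTranspose * H = (r : ℂ) • (((r : ℂ)⁻¹ • H.conjTranspose) * H) := by
          rw [Matrix.smul_mul, smul_smul, mul_inv_cancel₀ hr', one_smul]
      _ = (r : ℂ) • 1 := by rw [h3]
  have h5 := congrFun (congrFun h4 j) j'
  simpa [Matrix.mul_apply, Matrix.conjTranspose_apply, Matrix.one_apply, hjj] using h5

/-- Counting: the blocks through `x` partition the remaining `v - 1` points. -/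
lemma degree_sum [Fintype V] {B : Finset (Finset V)} {K : Finset ℕ}
    (hPBD : IsPBD B K) (x : V) :
    ∑ b ∈ B.filter (fun b => x ∈ b), (b.card - 1) = Fintype.card V - 1 := by
  classical
  have hdisj : ∀ b₁ ∈ B.filter (fun b => x ∈ b), ∀ b₂ ∈ B.filter (fun b => x ∈ b),
      b₁ ≠ b₂ → Disjoint (b₁.erase x) (b₂.erase x) := by
    intro b₁ h₁ b₂ h₂ hne
    rw [Finset.mem_filter] at h₁ h₂
    rw [Finset.disjoint_left]
    intro y hy₁ hy₂
    have hyx : y ≠ x := Finset.ne_of_mem_erase hy₁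
    obtain ⟨b₀, _, huniq⟩ := hPBD.2 x y (Ne.symm hyx)
    exact hne ((huniq b₁ ⟨h₁.1, h₁.2, Finset.mem_of_mem_erase hy₁⟩).trans
      (huniq b₂ ⟨h₂.1, h₂.2, Finset.mem_of_mem_erase hy₂⟩).symm)
  have hbu : (B.filter (fun b => x ∈ b)).biUnion (fun b => b.erase x)
      = Finset.univ.erase x := by
    ext y
    simp only [Finset.mem_biUnion, Finset.mem_filter, Finset.mem_erase, Finset.mem_univ,
      and_true]
    constructor
    · rintro ⟨b, ⟨_, _⟩, hy⟩
      exact hy.1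
    · intro hyx
      obtain ⟨b₀, ⟨hb₀B, hxb₀, hyb₀⟩, _⟩ := hPBD.2 x y (Ne.symm hyx)
      exact ⟨b₀, ⟨hb₀B, hxb₀⟩, hyx, hyb₀⟩
  have hcard := Finset.card_biUnion hdisj
  rw [hbu] at hcard
  rw [Finset.card_erase_of_mem (Finset.mem_univ x), Finset.card_univ] at hcard
  rw [hcard]
  refine Finset.sum_congr rfl fun b hb => ?_
  exact (Finset.card_erase_of_mem (Finset.mem_filter.mp hb).2).symm

/-- Real replication bounds: `(v-1)/(Kmax-1) ≤ r_x ≤ (v-1)/(Kmin-1)`. -/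
lemma repl_bounds [Fintype V] {B : Finset (Finset V)} {K : Finset ℕ} (hKne : K.Nonempty)
    (hPBD : IsPBD B K) (hKmin : 2 ≤ K.min' hKne) (x : V) :
    ((repl B x : ℝ)) * ((K.min' hKne : ℝ) - 1) ≤ (Fintype.card V : ℝ) - 1 ∧
    (Fintype.card V : ℝ) - 1 ≤ ((repl B x : ℝ)) * ((K.max' hKne : ℝ) - 1) := by
  classical
  have hdeg := degree_sum hPBD x
  have hreal : ∑ b ∈ B.filter (fun b => x ∈ b), ((b.card : ℝ) - 1)
      = (Fintype.card V : ℝ) - 1 := by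
    have h1 : ∀ b ∈ B.filter (fun b => x ∈ b), ((b.card : ℝ) - 1) = ((b.card - 1 : ℕ) : ℝ) := by
      intro b hb
      have : 1 ≤ b.card := Finset.card_pos.mpr ⟨x, (Finset.mem_filter.mp hb).2⟩
      rw [Nat.cast_sub this, Nat.cast_one]
    rw [Finset.sum_congr rfl h1, ← Nat.cast_sum, hdeg,
      Nat.cast_sub (by
        have : 0 < Fintype.card V := Fintype.card_pos_iff.mpr ⟨x⟩
        omega), Nat.cast_one]
  constructor
  · rw [← hreal]
    have : (repl B x : ℝ) * ((K.min' hKne : ℝ) - 1)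
        = ∑ _b ∈ B.filter (fun b => x ∈ b), ((K.min' hKne : ℝ) - 1) := by
      rw [Finset.sum_const, repl, nsmul_eq_mul]
    rw [this]
    refine Finset.sum_le_sum fun b hb => ?_
    have hbK := hPBD.1 b (Finset.mem_filter.mp hb).1
    have := K.min'_le _ hbK
    have : (K.min' hKne : ℝ) ≤ b.card := by exact_mod_cast this
    linarith
  · rw [← hreal]
    have : (repl B x : ℝ) * ((K.max' hKne : ℝ) - 1)
        = ∑ _b ∈ B.filter (fun b => x ∈ b), ((K.max' hKne : ℝ) - 1) := by
      rw [Finset.sum_const, repl, nsmul_eq_mul]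
    rw [this]
    refine Finset.sum_le_sum fun b hb => ?_
    have hbK := hPBD.1 b (Finset.mem_filter.mp hb).1
    have := K.le_max' _ hbK
    have : (b.card : ℝ) ≤ K.max' hKne := by exact_mod_cast this
    linarith

end Aux

/-- For the matrix `Φ` of Construction con0 built from a `PBD(v,K,1)` with `v ≥ 2`
and `2 ≤ K_min`: every column has unit ℓ₂-norm; two distinct columns labelled by the
same point are orthogonal; two columns labelled by distinct points have inner product
of modulus in `[(K_min−1)/(v−1), (K_max−1)/(v−1)]`; in particular
`MIP(Φ) ≤ (K_max−1)/(v−1)`. -/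
theorem stmt_9 {V : Type*} [Fintype V] [DecidableEq V]
    (B : Finset (Finset V)) (K : Finset ℕ) (hKne : K.Nonempty)
    (hPBD : IsPBD B K) (hv : 2 ≤ Fintype.card V) (hKmin : 2 ≤ K.min' hKne)
    (H : ∀ x : V, Matrix (Fin (repl B x)) (Fin (repl B x)) ℂ)
    (hH : ∀ x : V, IsComplexHadamard (H x))
    (σ : ∀ x : V, {b : Finset V // b ∈ B ∧ x ∈ b} → Fin (repl B x))
    (hσ : ∀ x : V, Function.Bijective (σ x)) :
    (∀ c : Σ x : V, Fin (repl B x),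
        Real.sqrt (∑ b : {b : Finset V // b ∈ B}, ‖con0 B H σ b c‖ ^ 2) = 1) ∧
    (∀ x : V, ∀ j j' : Fin (repl B x), j ≠ j' →
        ∑ b : {b : Finset V // b ∈ B},
          (starRingEnd ℂ) (con0 B H σ b ⟨x, j⟩) * con0 B H σ b ⟨x, j'⟩ = 0) ∧
    (∀ x y : V, x ≠ y → ∀ (j : Fin (repl B x)) (j' : Fin (repl B y)),
        ((K.min' hKne : ℝ) - 1) / ((Fintype.card V : ℝ) - 1) ≤
            ‖∑ b : {b : Finset V // b ∈ B},
              (starRingEnd ℂ) (con0 B H σ b ⟨x, j⟩) * con0 B H σ b ⟨y, j'⟩‖ ∧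
          ‖∑ b : {b : Finset V // b ∈ B},
              (starRingEnd ℂ) (con0 B H σ b ⟨x, j⟩) * con0 B H σ b ⟨y, j'⟩‖ ≤
            ((K.max' hKne : ℝ) - 1) / ((Fintype.card V : ℝ) - 1)) ∧
    (∀ c c' : Σ x : V, Fin (repl B x), c ≠ c' →
        colCoh (con0 B H σ) c c' ≤
          ((K.max' hKne : ℝ) - 1) / ((Fintype.card V : ℝ) - 1)) := by
  classical
  have hKmax : 2 ≤ K.max' hKne := le_trans hKmin (K.min'_le _ (K.max'_mem hKne))
  have hKmR : (2 : ℝ) ≤ (K.min' hKne : ℝ) := by exact_mod_cast hKmin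
  have hKMR : (2 : ℝ) ≤ (K.max' hKne : ℝ) := by exact_mod_cast hKmax
  have hvR : (2 : ℝ) ≤ (Fintype.card V : ℝ) := by exact_mod_cast hv
  -- column norms
  have hnorm : ∀ c : Σ x : V, Fin (repl B x),
      ∑ b : {b : Finset V // b ∈ B}, ‖con0 B H σ b c‖ ^ 2 = 1 := by
    rintro ⟨x, j⟩
    have hr : 0 < repl B x := j.pos
    rw [key_sum B x (σ x) (hσ x) _ (fun _ => ((repl B x : ℝ))⁻¹)
      (fun b h => by
        have hc : con0 B H σ b ⟨x, j⟩
            = (((Real.sqrt (repl B x))⁻¹ : ℝ) : ℂ) * H x (σ x ⟨b.1, b.2, h⟩) j := dif_pos h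
        rw [hc, norm_mul, (hH x).1, mul_one, Complex.norm_real,
          Real.norm_eq_abs, abs_of_nonneg (inv_nonneg.mpr (Real.sqrt_nonneg _)),
          inv_pow, Real.sq_sqrt (Nat.cast_nonneg _)])
      (fun b h => by
        have hc : con0 B H σ b ⟨x, j⟩ = 0 := dif_neg h
        rw [hc, norm_zero]; ring)]
    rw [Finset.sum_const, Finset.card_univ, Fintype.card_fin, nsmul_eq_mul,
      mul_inv_cancel₀ (by exact_mod_cast hr.ne')]
  have hnorm1 : ∀ c : Σ x : V, Fin (repl B x),
      Real.sqrt (∑ b : {b : Finset V // b ∈ B}, ‖con0 B H σ b c‖ ^ 2) = 1 := by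
    intro c; rw [hnorm c, Real.sqrt_one]
  -- orthogonality of columns with the same point label
  have horth : ∀ x : V, ∀ j j' : Fin (repl B x), j ≠ j' →
      ∑ b : {b : Finset V // b ∈ B},
        (starRingEnd ℂ) (con0 B H σ b ⟨x, j⟩) * con0 B H σ b ⟨x, j'⟩ = 0 := by
    intro x j j' hjj
    have hr : 0 < repl B x := j.pos
    rw [key_sum B x (σ x) (hσ x) _
      (fun i => ((((Real.sqrt (repl B x))⁻¹ : ℝ) : ℂ) * (((Real.sqrt (repl B x))⁻¹ : ℝ) : ℂ))
        * ((starRingEnd ℂ) (H x i j) * H x i j'))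
      (fun b h => by
        have h1 : con0 B H σ b ⟨x, j⟩
            = (((Real.sqrt (repl B x))⁻¹ : ℝ) : ℂ) * H x (σ x ⟨b.1, b.2, h⟩) j := dif_pos h
        have h2 : con0 B H σ b ⟨x, j'⟩
            = (((Real.sqrt (repl B x))⁻¹ : ℝ) : ℂ) * H x (σ x ⟨b.1, b.2, h⟩) j' := dif_pos h
        rw [h1, h2, map_mul, Complex.conj_ofReal]; ring)
      (fun b h => by
        have hc : con0 B H σ b ⟨x, j⟩ = 0 := dif_neg h
        rw [hc, map_zero, zero_mul])]
    rw [← Finset.mul_sum, hadamard_col hr (hH x) j j' hjj, mul_zero]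
  -- cross inner products : exact value
  have hcross : ∀ x y : V, x ≠ y → ∀ (j : Fin (repl B x)) (j' : Fin (repl B y)),
      ‖∑ b : {b : Finset V // b ∈ B},
        (starRingEnd ℂ) (con0 B H σ b ⟨x, j⟩) * con0 B H σ b ⟨y, j'⟩‖
      = (Real.sqrt (repl B x))⁻¹ * (Real.sqrt (repl B y))⁻¹ := by
    intro x y hxy j j'
    obtain ⟨b₀, ⟨hb₀B, hxb₀, hyb₀⟩, huniq⟩ := hPBD.2 x y hxy
    have hsum : ∑ b : {b : Finset V // b ∈ B},
        (starRingEnd ℂ) (con0 B H σ b ⟨x, j⟩) * con0 B H σ b ⟨y, j'⟩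
        = (starRingEnd ℂ) (con0 B H σ ⟨b₀, hb₀B⟩ ⟨x, j⟩) * con0 B H σ ⟨b₀, hb₀B⟩ ⟨y, j'⟩ := by
      refine Fintype.sum_eq_single _ ?_
      intro b hb
      by_cases hx : x ∈ b.1
      · by_cases hy : y ∈ b.1
        · exact absurd (Subtype.ext (huniq b.1 ⟨b.2, hx, hy⟩)) hb
        · have hc : con0 B H σ b ⟨y, j'⟩ = 0 := dif_neg hy
          rw [hc, mul_zero]
      · have hc : con0 B H σ b ⟨x, j⟩ = 0 := dif_neg hx
        rw [hc, map_zero, zero_mul]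
    have h1 : con0 B H σ (⟨b₀, hb₀B⟩ : {b : Finset V // b ∈ B}) ⟨x, j⟩
        = (((Real.sqrt (repl B x))⁻¹ : ℝ) : ℂ) * H x (σ x ⟨b₀, hb₀B, hxb₀⟩) j := dif_pos hxb₀
    have h2 : con0 B H σ (⟨b₀, hb₀B⟩ : {b : Finset V // b ∈ B}) ⟨y, j'⟩
        = (((Real.sqrt (repl B y))⁻¹ : ℝ) : ℂ) * H y (σ y ⟨b₀, hb₀B, hyb₀⟩) j' := dif_pos hyb₀
    rw [hsum, h1, h2, map_mul, Complex.conj_ofReal]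
    rw [show ((((Real.sqrt (repl B x))⁻¹ : ℝ) : ℂ) * (starRingEnd ℂ) (H x (σ x ⟨b₀, hb₀B, hxb₀⟩) j))
        * ((((Real.sqrt (repl B y))⁻¹ : ℝ) : ℂ) * H y (σ y ⟨b₀, hb₀B, hyb₀⟩) j')
      = ((((Real.sqrt (repl B x))⁻¹ : ℝ) : ℂ) * (((Real.sqrt (repl B y))⁻¹ : ℝ) : ℂ))
        * ((starRingEnd ℂ) (H x (σ x ⟨b₀, hb₀B, hxb₀⟩) j) * H y (σ y ⟨b₀, hb₀B, hyb₀⟩) j') from by ring]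
    rw [norm_mul, norm_mul, norm_mul, RCLike.norm_conj, (hH x).1, (hH y).1,
      Complex.norm_real, Complex.norm_real, Real.norm_eq_abs, Real.norm_eq_abs,
      abs_of_nonneg (inv_nonneg.mpr (Real.sqrt_nonneg _)),
      abs_of_nonneg (inv_nonneg.mpr (Real.sqrt_nonneg _))]
    ring
  -- bounds on the cross inner products
  have hbound : ∀ x y : V, x ≠ y → ∀ (j : Fin (repl B x)) (j' : Fin (repl B y)),
      ((K.min' hKne : ℝ) - 1) / ((Fintype.card V : ℝ) - 1) ≤
          ‖∑ b : {b : Finset V // b ∈ B},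
            (starRingEnd ℂ) (con0 B H σ b ⟨x, j⟩) * con0 B H σ b ⟨y, j'⟩‖ ∧
        ‖∑ b : {b : Finset V // b ∈ B},
            (starRingEnd ℂ) (con0 B H σ b ⟨x, j⟩) * con0 B H σ b ⟨y, j'⟩‖ ≤
          ((K.max' hKne : ℝ) - 1) / ((Fintype.card V : ℝ) - 1) := by
    intro x y hxy j j'
    rw [hcross x y hxy j j']
    have hrx : (0 : ℝ) < (repl B x : ℝ) := by exact_mod_cast j.pos
    have hry : (0 : ℝ) < (repl B y : ℝ) := by exact_mod_cast j'.pos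
    obtain ⟨hx1, hx2⟩ := repl_bounds hKne hPBD hKmin x
    obtain ⟨hy1, hy2⟩ := repl_bounds hKne hPBD hKmin y
    set m : ℝ := ((Fintype.card V : ℝ) - 1) / ((K.max' hKne : ℝ) - 1) with hm_def
    set M : ℝ := ((Fintype.card V : ℝ) - 1) / ((K.min' hKne : ℝ) - 1) with hM_def
    have hm : 0 < m := div_pos (by linarith) (by linarith)
    have hM : 0 < M := div_pos (by linarith) (by linarith)
    have hmx : m ≤ (repl B x : ℝ) := by
      rw [hm_def, div_le_iff₀ (by linarith)]; linarith
    have hmy : m ≤ (repl B y : ℝ) := by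
      rw [hm_def, div_le_iff₀ (by linarith)]; linarith
    have hMx : (repl B x : ℝ) ≤ M := by
      rw [hM_def, le_div_iff₀ (by linarith)]; linarith
    have hMy : (repl B y : ℝ) ≤ M := by
      rw [hM_def, le_div_iff₀ (by linarith)]; linarith
    have hprod_lo : m ≤ Real.sqrt (repl B x) * Real.sqrt (repl B y) := by
      calc m = Real.sqrt m * Real.sqrt m := (Real.mul_self_sqrt hm.le).symm
        _ ≤ Real.sqrt (repl B x) * Real.sqrt (repl B y) :=
          mul_le_mul (Real.sqrt_le_sqrt hmx) (Real.sqrt_le_sqrt hmy)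
            (Real.sqrt_nonneg _) (Real.sqrt_nonneg _)
    have hprod_hi : Real.sqrt (repl B x) * Real.sqrt (repl B y) ≤ M := by
      calc Real.sqrt (repl B x) * Real.sqrt (repl B y)
          ≤ Real.sqrt M * Real.sqrt M :=
            mul_le_mul (Real.sqrt_le_sqrt hMx) (Real.sqrt_le_sqrt hMy)
              (Real.sqrt_nonneg _) (Real.sqrt_nonneg _)
        _ = M := Real.mul_self_sqrt hM.le
    have hprod_pos : 0 < Real.sqrt (repl B x) * Real.sqrt (repl B y) :=
      mul_pos (Real.sqrt_pos.mpr hrx) (Real.sqrt_pos.mpr hry)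
    rw [← mul_inv]
    constructor
    · have h := inv_anti₀ hprod_pos hprod_hi
      rwa [hM_def, inv_div] at h
    · have h := inv_anti₀ hm hprod_lo
      rwa [hm_def, inv_div] at h
  refine ⟨hnorm1, horth, hbound, ?_⟩
  rintro ⟨x, j⟩ ⟨y, j'⟩ hcc
  have hcoh : colCoh (con0 B H σ) ⟨x, j⟩ ⟨y, j'⟩
      = ‖∑ b : {b : Finset V // b ∈ B},
          (starRingEnd ℂ) (con0 B H σ b ⟨x, j⟩) * con0 B H σ b ⟨y, j'⟩‖ := by
    rw [colCoh, hnorm1 ⟨x, j⟩, hnorm1 ⟨y, j'⟩, one_mul, div_one]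
  rw [hcoh]
  by_cases hxy : x = y
  · subst hxy
    have hjj : j ≠ j' := by
      rintro rfl; exact hcc rfl
    rw [horth x j j' hjj, norm_zero]
    exact div_nonneg (by linarith) (by linarith)
  · exact (hbound x y hxy j j').2
end

section
/- Let K be a set of integers with 2 ≤ K_min and K_max ≤ √2·(K_min−1). Suppose there exists a PBD(v,K,1) with n blocks whose block sizes sum to N, where 2n−1 ≤ N. Then there exists an n×N complex matrix with (ℓ₁,t)-recoverability for every positive integer t ≤ √n/4. -/
/-!
Place, on the `r_x` blocks through each point `x`, the columns of the `r_x × r_x` Fourier matrix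
scaled by `1/√r_x`. The columns of one point are then orthonormal, and two columns of distinct
points `x ≠ y` overlap in exactly one block, so their inner product has modulus `1/√(r_x r_y)`.
Counting the points met by the blocks through `x` gives `v - 1 ≤ r_x (K_max - 1)`, counting pairs
gives `n K_min (K_min - 1) ≤ v (v - 1)`, and `K_max ≤ √2 (K_min - 1)` combines the two into
`√n ≤ 2 r_x`. Hence the mutual coherence is at most `μ = 2/√n`, and `(2t - 1) μ < 1` for
`t ≤ √n/4`; the classical coherence argument turns this into the null space property of order
`t`, which implies `ℓ₁`-recoverability.
-/

open scoped BigOperators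

open Finset Matrix Complex

section Recovery

variable {m ι : Type*} [Fintype m] [Fintype ι] [DecidableEq ι]

theorem recoverable_of_null_space_property (Φ : Matrix m ι ℂ) (t : ℕ)
    (hnsp : ∀ h : ι → ℂ, Φ *ᵥ h = 0 → h ≠ 0 → ∀ S : Finset ι, #S ≤ t →
      2 * ∑ i ∈ S, ‖h i‖ < ∑ i, ‖h i‖) :
    Recoverable Φ t := by
  intro x hx z hz hzx
  have hker : Φ *ᵥ (z - x) = 0 := by rw [mulVec_sub, hz, sub_self]
  have hlt := hnsp (z - x) hker (sub_ne_zero.mpr hzx) _ hx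
  have hpoint : ∀ i,
      ‖x i‖ + ‖(z - x) i‖ - 2 * (if x i ≠ 0 then ‖(z - x) i‖ else 0) ≤ ‖z i‖ := by
    intro i
    by_cases hxi : x i = 0
    · simp [hxi]
    · simp only [Pi.sub_apply, ne_eq, hxi, not_false_eq_true, if_true]
      linarith [norm_sub_norm_le (x i) (z i), norm_sub_rev (z i) (x i)]
  have hsum := sum_le_sum fun i (_ : i ∈ univ) => hpoint i
  rw [sum_sub_distrib, sum_add_distrib, ← mul_sum, ← sum_filter]
    at hsum
  linarith

theorem norm_mul_one_add_le_of_mulVec_eq_zero {Φ : Matrix m ι ℂ} {μ : ℝ}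
    (hdiag : ∀ i, (Φᴴ * Φ) i i = 1) (hoff : ∀ i j, i ≠ j → ‖(Φᴴ * Φ) i j‖ ≤ μ)
    {h : ι → ℂ} (hh : Φ *ᵥ h = 0) (i : ι) :
    ‖h i‖ * (1 + μ) ≤ μ * ∑ j, ‖h j‖ := by
  have hgram : ∑ j, (Φᴴ * Φ) i j * h j = 0 := by
    have := congrFun (congrArg (Φᴴ *ᵥ ·) hh) i
    rwa [mulVec_mulVec, mulVec_zero] at this
  rw [← add_sum_erase _ _ (mem_univ i), hdiag, one_mul, add_eq_zero_iff_eq_neg] at hgram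
  have hbound : ‖h i‖ ≤ μ * ∑ j ∈ univ.erase i, ‖h j‖ := calc
    ‖h i‖ ≤ ∑ j ∈ univ.erase i, ‖(Φᴴ * Φ) i j * h j‖ := by
      rw [hgram, norm_neg]; exact norm_sum_le _ _
    _ ≤ ∑ j ∈ univ.erase i, μ * ‖h j‖ := by
      refine sum_le_sum fun j hj => ?_
      rw [norm_mul]
      exact mul_le_mul_of_nonneg_right (hoff i j (ne_of_mem_erase hj).symm)
        (norm_nonneg _)
    _ = μ * ∑ j ∈ univ.erase i, ‖h j‖ := (mul_sum ..).symm
  rw [← add_sum_erase _ _ (mem_univ i)]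
  linarith

theorem recoverable_of_coherence {Φ : Matrix m ι ℂ} {μ : ℝ} (hμ : 0 ≤ μ)
    (hdiag : ∀ i, (Φᴴ * Φ) i i = 1) (hoff : ∀ i j, i ≠ j → ‖(Φᴴ * Φ) i j‖ ≤ μ)
    {t : ℕ} (ht : (2 * t - 1) * μ < 1) :
    Recoverable Φ t := by
  refine recoverable_of_null_space_property Φ t fun h hh hne S hS => ?_
  have hpos : 0 < ∑ j, ‖h j‖ := by
    obtain ⟨i, hi⟩ := Function.ne_iff.mp hne
    exact sum_pos' (fun j _ => norm_nonneg _) ⟨i, mem_univ _, norm_pos_iff.mpr hi⟩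
  have hS' : (#S : ℝ) ≤ t := by exact_mod_cast hS
  have hsumS : (∑ i ∈ S, ‖h i‖) * (1 + μ) ≤ #S * (μ * ∑ j, ‖h j‖) := by
    rw [sum_mul, ← nsmul_eq_mul]
    exact sum_le_card_nsmul _ _ _ fun i _ =>
      norm_mul_one_add_le_of_mulVec_eq_zero hdiag hoff hh i
  nlinarith [mul_le_mul_of_nonneg_right hS' (mul_nonneg hμ hpos.le)]

end Recovery

theorem IsComplexHadamard.conjTranspose_mul_self {r : ℕ} {H : Matrix (Fin r) (Fin r) ℂ}
    (hH : IsComplexHadamard H) : Hᴴ * H = (r : ℂ) • 1 := by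
  rcases Nat.eq_zero_or_pos r with rfl | hr
  · exact Subsingleton.elim _ _
  have hr' : (r : ℂ) ≠ 0 := by exact_mod_cast hr.ne'
  have hinv : H * ((r : ℂ)⁻¹ • Hᴴ) = 1 := by
    rw [mul_smul_comm, hH.2, smul_smul, inv_mul_cancel₀ hr', one_smul]
  calc Hᴴ * H = (r : ℂ) • (((r : ℂ)⁻¹ • Hᴴ) * H) := by
        rw [smul_mul_assoc, smul_smul, mul_inv_cancel₀ hr', one_smul]
    _ = (r : ℂ) • 1 := by rw [mul_eq_one_comm.mp hinv]

noncomputable def dft (r : ℕ) : Matrix (Fin r) (Fin r) ℂ :=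
  fun p q => exp (2 * Real.pi * I / r) ^ ((p : ℕ) * q)

theorem isComplexHadamard_dft (r : ℕ) : IsComplexHadamard (dft r) := by
  rcases Nat.eq_zero_or_pos r with rfl | hr
  · exact ⟨fun i => i.elim0, Subsingleton.elim _ _⟩
  have hω := Complex.isPrimitiveRoot_exp r hr.ne'
  set ω := exp (2 * Real.pi * I / r)
  have hω1 : ‖ω‖ = 1 := hω.norm'_eq_one hr.ne'
  refine ⟨fun p q => by rw [dft, norm_pow, hω1, one_pow], ?_⟩
  ext p p'
  set z := ω ^ (p : ℕ) * star ω ^ (p' : ℕ) with hz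
  have hterm : ∀ q : Fin r, dft r p q * star (dft r p' q) = z ^ (q : ℕ) := fun q => by
    show ω ^ ((p : ℕ) * q) * star (ω ^ ((p' : ℕ) * q)) = _
    rw [star_pow]; ring
  have hstar : star ω = ω⁻¹ := (Complex.inv_eq_conj hω1).symm
  simp only [mul_apply, conjTranspose_apply, hterm, Matrix.smul_apply, one_apply, smul_eq_mul,
    mul_ite, mul_one, mul_zero]
  rw [Fin.sum_univ_eq_sum_range (fun q => z ^ q) r]
  split_ifs with hpp
  · have : z = 1 := by
      rw [hz, hpp, hstar, inv_pow, mul_inv_cancel₀ (pow_ne_zero _ (hω.ne_zero hr.ne'))]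
    simp [this]
  · have hz1 : z ≠ 1 := by
      intro h
      apply hpp
      rw [hz, hstar, inv_pow, mul_inv_eq_one₀ (pow_ne_zero _ (hω.ne_zero hr.ne'))] at h
      exact Fin.ext (hω.pow_inj p.isLt p'.isLt h)
    have hzr : z ^ r = 1 := by
      rw [hz, mul_pow, ← pow_mul, ← pow_mul, mul_comm (p : ℕ), mul_comm (p' : ℕ), pow_mul,
        pow_mul, ← star_pow, hω.pow_eq_one]
      simp
    rw [geom_sum_eq hz1, hzr, sub_self, zero_div]

section Construction

variable {V : Type*} [DecidableEq V] {B : Finset (Finset V)}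
  {H : ∀ x : V, Matrix (Fin (repl B x)) (Fin (repl B x)) ℂ}
  {σ : ∀ x : V, {b : Finset V // b ∈ B ∧ x ∈ b} → Fin (repl B x)}

theorem sum_dite_mem_block [Fintype V] {M : Type*} [AddCommMonoid M] (x : V)
    (g : {b : Finset V // b ∈ B ∧ x ∈ b} → M) :
    ∑ b : {b // b ∈ B}, (if h : x ∈ b.1 then g ⟨b.1, b.2, h⟩ else 0) = ∑ b, g b := by
  symm
  refine Fintype.sum_of_injective (fun b => ⟨b.1, b.2.1⟩)
    (fun b b' h => by simpa [Subtype.ext_iff] using h) _ _ ?_ ?_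
  · intro b hb
    rw [dif_neg]
    exact fun hx => hb ⟨⟨b.1, b.2, hx⟩, rfl⟩
  · intro b
    rw [dif_pos b.2.2]

theorem star_con0_mul_con0 (b : {b // b ∈ B}) (x y : V) (s : Fin (repl B x))
    (s' : Fin (repl B y)) :
    star (con0 B H σ b ⟨x, s⟩) * con0 B H σ b ⟨y, s'⟩ =
      if h : x ∈ b.1 ∧ y ∈ b.1 then
        ((Real.sqrt (repl B x))⁻¹ * (Real.sqrt (repl B y))⁻¹ : ℝ) *
          (star (H x (σ x ⟨b.1, b.2, h.1⟩) s) * H y (σ y ⟨b.1, b.2, h.2⟩) s')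
      else 0 := by
  unfold con0
  by_cases hx : x ∈ b.1 <;> by_cases hy : y ∈ b.1 <;>
    simp only [hx, hy, ↓reduceDIte, and_self, and_true, and_false, star_zero, zero_mul, mul_zero,
      star_mul', RCLike.star_def, conj_ofReal, ofReal_mul]
  ring

theorem gram_con0_apply_same_point [Fintype V] (x : V) (hH : IsComplexHadamard (H x))
    (hσ : Function.Bijective (σ x)) (s s' : Fin (repl B x)) :
    ((con0 B H σ)ᴴ * con0 B H σ) ⟨x, s⟩ ⟨x, s'⟩ = (1 : Matrix _ _ ℂ) s s' := by
  have hr : (repl B x : ℂ) ≠ 0 := by exact_mod_cast s.pos.ne'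
  simp only [mul_apply, conjTranspose_apply, star_con0_mul_con0, and_self]
  rw [sum_dite_mem_block x fun b => _ * (star (H x (σ x b) s) * H x (σ x b) s'), ← mul_sum,
    hσ.sum_comp (fun p => star (H x p s) * H x p s')]
  have hcol := congrFun (congrFun hH.conjTranspose_mul_self s) s'
  simp only [mul_apply, conjTranspose_apply, Matrix.smul_apply, smul_eq_mul] at hcol
  rw [hcol, ← mul_inv, Real.mul_self_sqrt (Nat.cast_nonneg _), ← mul_assoc]
  push_cast
  rw [inv_mul_cancel₀ hr, one_mul]

theorem norm_gram_con0_apply_of_ne {K : Finset ℕ} (hB : IsPBD B K)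
    (hH : ∀ x, IsComplexHadamard (H x)) {x y : V} (hxy : x ≠ y)
    (s : Fin (repl B x)) (s' : Fin (repl B y)) :
    ‖((con0 B H σ)ᴴ * con0 B H σ) ⟨x, s⟩ ⟨y, s'⟩‖ =
      (Real.sqrt (repl B x))⁻¹ * (Real.sqrt (repl B y))⁻¹ := by
  obtain ⟨b₀, ⟨hb₀, hx₀, hy₀⟩, huniq⟩ := hB.2 x y hxy
  simp only [mul_apply, conjTranspose_apply]
  rw [Fintype.sum_eq_single ⟨b₀, hb₀⟩ fun b hb => ?_, star_con0_mul_con0,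
    dif_pos ⟨hx₀, hy₀⟩, norm_mul, norm_mul, norm_star, (hH x).1, (hH y).1, Complex.norm_real,
    Real.norm_of_nonneg (by positivity), mul_one, mul_one]
  rw [star_con0_mul_con0, dif_neg]
  exact fun h => hb (Subtype.ext (huniq b.1 ⟨b.2, h⟩))

theorem norm_gram_con0_le [Fintype V] {K : Finset ℕ} (hB : IsPBD B K)
    (hH : ∀ x, IsComplexHadamard (H x)) (hσ : ∀ x, Function.Bijective (σ x)) {μ : ℝ}
    (hμ : 0 ≤ μ)
    (hμr : ∀ x y, x ≠ y → (Real.sqrt (repl B x))⁻¹ * (Real.sqrt (repl B y))⁻¹ ≤ μ)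
    {c c' : Σ x, Fin (repl B x)} (hcc : c ≠ c') :
    ‖((con0 B H σ)ᴴ * con0 B H σ) c c'‖ ≤ μ := by
  obtain ⟨x, s⟩ := c
  obtain ⟨y, s'⟩ := c'
  by_cases hxy : x = y
  · subst hxy
    have hss : s ≠ s' := fun h => hcc (h ▸ rfl)
    rwa [gram_con0_apply_same_point x (hH x) (hσ x), one_apply_ne hss, norm_zero]
  · rw [norm_gram_con0_apply_of_ne hB hH hxy]
    exact hμr x y hxy

end Construction

theorem two_le_min'_of_max'_le_sqrt_two_mul {K : Finset ℕ} (hK : K.Nonempty)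
    (hKmax : (K.max' hK : ℝ) ≤ Real.sqrt 2 * ((K.min' hK : ℝ) - 1)) : 2 ≤ K.min' hK := by
  have hmin : (K.min' hK : ℝ) ≤ K.max' hK := by exact_mod_cast K.min'_le_max' hK
  by_contra! h
  have h1 : (K.min' hK : ℝ) ≤ 1 := by exact_mod_cast Nat.le_of_lt_succ h
  nlinarith [mul_nonneg (sub_nonneg.2 Real.one_lt_sqrt_two.le) (sub_nonneg.2 h1)]

theorem le_two_mul_sq_of_counting_bounds {n v r k k' : ℝ} (hv : 2 ≤ v) (hk : 1 < k)
    (hkk' : k ≤ k') (hk' : k' ≤ Real.sqrt 2 * (k - 1)) (hr : v - 1 ≤ r * (k' - 1))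
    (hn : n * (k * (k - 1)) ≤ v * (v - 1)) : n ≤ (2 * r) ^ 2 := by
  have hsq : (k' - 1) ^ 2 ≤ 2 * (k - 1) ^ 2 := by
    calc (k' - 1) ^ 2 ≤ (Real.sqrt 2 * (k - 1)) ^ 2 :=
          pow_le_pow_left₀ (by linarith) (by linarith) 2
      _ = 2 * (k - 1) ^ 2 := by rw [mul_pow, Real.sq_sqrt zero_le_two]
  have hvr : (v - 1) ^ 2 ≤ 2 * r ^ 2 * (k - 1) ^ 2 := by
    calc (v - 1) ^ 2 ≤ (r * (k' - 1)) ^ 2 := pow_le_pow_left₀ (by linarith) hr 2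
      _ = r ^ 2 * (k' - 1) ^ 2 := mul_pow ..
      _ ≤ r ^ 2 * (2 * (k - 1) ^ 2) := by gcongr
      _ = 2 * r ^ 2 * (k - 1) ^ 2 := by ring
  -- `2k(v - 1)² - v(v - 1)(k - 1)` factors as this product.
  have hv' : 0 ≤ (v - 1) * (k * (v - 2) + v) :=
    mul_nonneg (by linarith) (by nlinarith)
  have hpos : 0 < k * (k - 1) ^ 2 := by positivity
  refine le_of_mul_le_mul_right ?_ hpos
  calc n * (k * (k - 1) ^ 2) = n * (k * (k - 1)) * (k - 1) := by ring
    _ ≤ v * (v - 1) * (k - 1) := by gcongr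
    _ ≤ 2 * k * (v - 1) ^ 2 := by nlinarith
    _ ≤ 2 * k * (2 * r ^ 2 * (k - 1) ^ 2) := by gcongr
    _ = (2 * r) ^ 2 * (k * (k - 1) ^ 2) := by ring

section Design

variable {V : Type*} [Fintype V] [DecidableEq V] {B : Finset (Finset V)} {K : Finset ℕ}

theorem card_subtype_mem_block (x : V) :
    Fintype.card {b : Finset V // b ∈ B ∧ x ∈ b} = repl B x := by
  rw [Fintype.card_subtype, repl]
  congr 1
  ext
  simp

theorem sum_sum_filter_mem {M : Type*} [AddCommMonoid M] (f : Finset V → M) :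
    ∑ x, ∑ b ∈ B with x ∈ b, f b = ∑ b ∈ B, #b • f b := by
  simp_rw [sum_filter]
  rw [sum_comm]
  refine sum_congr rfl fun b _ => ?_
  rw [← sum_filter, filter_univ_mem, sum_const]

theorem sum_repl : ∑ x, repl B x = ∑ b ∈ B, #b := by
  simpa only [repl, sum_const, smul_eq_mul, mul_one] using
    sum_sum_filter_mem (B := B) (fun _ => (1 : ℕ))

theorem IsPBD.sum_card_sub_one_of_mem (hB : IsPBD B K) (x : V) :
    ∑ b ∈ B with x ∈ b, (#b - 1) = Fintype.card V - 1 := by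
  have hdisj : (↑(B.filter (x ∈ ·)) : Set (Finset V)).PairwiseDisjoint (·.erase x) := by
    intro b₁ hb₁ b₂ hb₂ hne
    simp only [coe_filter, Set.mem_ofPred_eq] at hb₁ hb₂
    refine disjoint_left.mpr fun y hy₁ hy₂ => hne ?_
    obtain ⟨hyx, hy₁⟩ := mem_erase.mp hy₁
    obtain ⟨-, hy₂⟩ := mem_erase.mp hy₂
    exact (hB.2 x y (Ne.symm hyx)).unique ⟨hb₁.1, hb₁.2, hy₁⟩ ⟨hb₂.1, hb₂.2, hy₂⟩
  have hcover : (B.filter (x ∈ ·)).biUnion (·.erase x) = univ.erase x := by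
    ext y
    simp only [mem_biUnion, mem_filter, mem_erase, mem_univ, and_true]
    refine ⟨fun ⟨_, _, hyx, _⟩ => hyx, fun hyx => ?_⟩
    obtain ⟨b, ⟨hb, hxb, hyb⟩, -⟩ := hB.2 x y (Ne.symm hyx)
    exact ⟨b, ⟨hb, hxb⟩, hyx, hyb⟩
  have := card_biUnion hdisj
  rw [hcover, card_erase_of_mem (mem_univ x), card_univ] at this
  rw [this]
  exact sum_congr rfl fun b hb => (card_erase_of_mem (mem_filter.mp hb).2).symm

theorem IsPBD.sum_card_mul_card_sub_one (hB : IsPBD B K) :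
    ∑ b ∈ B, #b * (#b - 1) = Fintype.card V * (Fintype.card V - 1) := by
  calc ∑ b ∈ B, #b * (#b - 1) = ∑ x, ∑ b ∈ B with x ∈ b, (#b - 1) :=
        (sum_sum_filter_mem _).symm
    _ = ∑ _x : V, (Fintype.card V - 1) :=
        sum_congr rfl fun x _ => hB.sum_card_sub_one_of_mem x
    _ = Fintype.card V * (Fintype.card V - 1) := by rw [sum_const, card_univ, smul_eq_mul]

theorem IsPBD.card_sub_one_le_repl_mul (hB : IsPBD B K) (hK : K.Nonempty) (x : V) :
    Fintype.card V - 1 ≤ repl B x * (K.max' hK - 1) := by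
  rw [← hB.sum_card_sub_one_of_mem x, repl, ← smul_eq_mul]
  exact sum_le_card_nsmul _ _ _ fun b hb =>
    Nat.sub_le_sub_right (le_max' _ _ (hB.1 b (mem_filter.mp hb).1)) 1

theorem IsPBD.card_mul_min'_le (hB : IsPBD B K) (hK : K.Nonempty) :
    #B * (K.min' hK * (K.min' hK - 1)) ≤ Fintype.card V * (Fintype.card V - 1) := by
  rw [← hB.sum_card_mul_card_sub_one, ← smul_eq_mul]
  exact card_nsmul_le_sum _ _ _ fun b hb =>
    Nat.mul_le_mul (min'_le _ _ (hB.1 b hb)) (Nat.sub_le_sub_right (min'_le _ _ (hB.1 b hb)) 1)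

theorem IsPBD.sqrt_card_le_two_mul_repl (hB : IsPBD B K) (hK : K.Nonempty)
    (hKmax : (K.max' hK : ℝ) ≤ Real.sqrt 2 * ((K.min' hK : ℝ) - 1)) (x : V) :
    Real.sqrt #B ≤ 2 * repl B x := by
  have hk := two_le_min'_of_max'_le_sqrt_two_mul hK hKmax
  have hkk' := K.min'_le_max' hK
  have hcount := hB.card_mul_min'_le hK
  have hrepl := hB.card_sub_one_le_repl_mul hK x
  rw [Real.sqrt_le_left (by positivity)]
  rcases Nat.lt_or_ge (Fintype.card V) 2 with hv | hv
  · have hB0 : #B = 0 := by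
      have : #B * (K.min' hK * (K.min' hK - 1)) = 0 := by
        rw [← Nat.le_zero]
        exact hcount.trans (Nat.mul_eq_zero.mpr (by omega)).le
      exact (Nat.mul_eq_zero.mp this).resolve_right (Nat.mul_ne_zero (by omega) (by omega))
    simp [hB0]
  refine le_two_mul_sq_of_counting_bounds (v := Fintype.card V) (k := K.min' hK)
    (k' := K.max' hK) (by exact_mod_cast hv) (by exact_mod_cast hk) (by exact_mod_cast hkk')
    hKmax ?_ ?_
  · have : ((Fintype.card V - 1 : ℕ) : ℝ) ≤ ((repl B x * (K.max' hK - 1) : ℕ) : ℝ) := by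
      exact_mod_cast hrepl
    push_cast [Nat.cast_sub (show 1 ≤ Fintype.card V by omega),
      Nat.cast_sub (show 1 ≤ K.max' hK by omega)] at this
    exact this
  · have : ((#B * (K.min' hK * (K.min' hK - 1)) : ℕ) : ℝ) ≤
        ((Fintype.card V * (Fintype.card V - 1) : ℕ) : ℝ) := by
      exact_mod_cast hcount
    push_cast [Nat.cast_sub (show 1 ≤ Fintype.card V by omega),
      Nat.cast_sub (show 1 ≤ K.min' hK by omega)] at this
    exact this

end Design

theorem inv_sqrt_mul_inv_sqrt_le {a b s : ℝ} (hs : 0 < s) (ha : s ≤ 2 * a) (hb : s ≤ 2 * b) :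
    (Real.sqrt a)⁻¹ * (Real.sqrt b)⁻¹ ≤ 2 / s := by
  have hab : s / 2 ≤ Real.sqrt (a * b) := by
    rw [Real.le_sqrt (by positivity) (by nlinarith)]
    nlinarith
  rw [← mul_inv, ← Real.sqrt_mul (by linarith), ← inv_div]
  exact inv_anti₀ (by positivity) hab

theorem stmt_10_general (K : Finset ℕ) (hKne : K.Nonempty)
    (hKmax : (K.max' hKne : ℝ) ≤ Real.sqrt 2 * ((K.min' hKne : ℝ) - 1))
    (v n N : ℕ)
    (hex : ∃ (V : Type) (_ : Fintype V) (_ : DecidableEq V) (B : Finset (Finset V)),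
      Fintype.card V = v ∧ IsPBD B K ∧ B.card = n ∧ ∑ b ∈ B, b.card = N) :
    ∃ Φ : Matrix (Fin n) (Fin N) ℂ,
      ∀ t : ℕ, 0 < t → (t : ℝ) ≤ Real.sqrt n / 4 → Recoverable Φ t := by
  obtain ⟨V, _, _, B, -, hB, rfl, rfl⟩ := hex
  have hcols : Fintype.card (Σ x : V, Fin (repl B x)) = ∑ b ∈ B, #b := by
    simp only [Fintype.card_sigma, Fintype.card_fin, sum_repl]
  let eB := Fintype.equivFinOfCardEq (Fintype.card_coe B)
  let eC := Fintype.equivFinOfCardEq hcols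
  let σ x := Fintype.equivFinOfCardEq (card_subtype_mem_block (B := B) x)
  let M := con0 B (fun x => dft (repl B x)) (fun x => σ x)
  have hgram : (M.submatrix eB.symm eC.symm)ᴴ * M.submatrix eB.symm eC.symm =
      (Mᴴ * M).submatrix eC.symm eC.symm := by
    rw [conjTranspose_submatrix, submatrix_mul_equiv]
  refine ⟨M.submatrix eB.symm eC.symm, fun t ht htn => ?_⟩
  have hn : 0 < Real.sqrt #B := by
    have : (1 : ℝ) ≤ t := by exact_mod_cast ht
    linarith
  refine recoverable_of_coherence (μ := 2 / Real.sqrt #B) (by positivity) (fun i => ?_)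
    (fun i j hij => ?_) ?_
  · rw [hgram, submatrix_apply]
    exact (gram_con0_apply_same_point _ (isComplexHadamard_dft _) (σ _).bijective _ _).trans
      (one_apply_eq _)
  · rw [hgram, submatrix_apply]
    exact norm_gram_con0_le hB (fun x => isComplexHadamard_dft _) (fun x => (σ x).bijective)
      (by positivity) (fun x y _ => inv_sqrt_mul_inv_sqrt_le hn
        (hB.sqrt_card_le_two_mul_repl hKne hKmax x) (hB.sqrt_card_le_two_mul_repl hKne hKmax y))
      (eC.symm.injective.ne hij)
  · rw [← mul_div_assoc, div_lt_one hn]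
    linarith

/-- If `2 ≤ K_min`, `K_max ≤ √2 (K_min − 1)`, and there exists a `PBD(v,K,1)` with
`n` blocks whose block sizes sum to `N` with `2n − 1 ≤ N`, then there exists an
`n × N` complex matrix with `(ℓ₁,t)`-recoverability for all positive `t ≤ √n/4`. -/
theorem stmt_10 (K : Finset ℕ) (hKne : K.Nonempty) (hKmin : 2 ≤ K.min' hKne)
    (hKmax : (K.max' hKne : ℝ) ≤ Real.sqrt 2 * ((K.min' hKne : ℝ) - 1))
    (v n N : ℕ) (hnN : 2 * n - 1 ≤ N)
    (hex : ∃ (V : Type) (_ : Fintype V) (_ : DecidableEq V) (B : Finset (Finset V)),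
      Fintype.card V = v ∧ IsPBD B K ∧ B.card = n ∧ ∑ b ∈ B, b.card = N) :
    ∃ Φ : Matrix (Fin n) (Fin N) ℂ,
      ∀ t : ℕ, 0 < t → (t : ℝ) ≤ Real.sqrt n / 4 → Recoverable Φ t :=
  stmt_10_general K hKne hKmax v n N hex
end

section
/- For every integer k > 3 there exists a constant C_k such that for every integer n > C_k there exists an n×(kn) complex matrix with (ℓ₁,t)-recoverability for every positive integer t ≤ √n/4. -/
open scoped BigOperators

/-!
If the columns of `Φ` have unit norm and pairwise inner products of modulus at most `μ`, then
for `h` in the kernel the relation `Φᴴ Φ h = 0` gives `(1 + μ) |hᵢ| ≤ μ ‖h‖₁`. Summing over `t`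
coordinates shows that when `(2t - 1) μ < 1` every nonzero kernel vector carries less than half
of its `ℓ₁` mass on any `t` coordinates, and this null space property is exactly what makes
`t`-sparse vectors the unique `ℓ₁` minimisers.

Such matrices come from chirps: for a prime `p ≠ 2` the `p²` vectors
`x ↦ ψ (a x² + b x) / √p` over `𝔽_p` have mutual inner products that either vanish or are
quadratic Gauss sums divided by `p`, of modulus `1 / √p`. Choosing a prime `p ∈ (n/2, n]`, padding
with zero rows and keeping `kn ≤ p²` of the columns gives coherence `1 / √p`, and
`t ≤ √n / 4 ≤ √p / 2` makes `(2t - 1) / √p < 1`.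
-/

open Finset Matrix

namespace Matrix

theorem conjTranspose_mul_self_one_submatrix {m m' α : Type*} [Fintype m'] [DecidableEq m]
    [DecidableEq m'] [Semiring α] [StarRing α] {f : m → m'} (hf : Function.Injective f) :
    ((1 : Matrix m' m' α).submatrix id f)ᴴ * (1 : Matrix m' m' α).submatrix id f = 1 := by
  rw [conjTranspose_submatrix, conjTranspose_one,
    ← submatrix_mul _ _ _ _ _ Function.bijective_id, Matrix.one_mul, submatrix_one _ hf]

variable {m ι : Type*} [Fintype m]

def IsIncoherent (Φ : Matrix m ι ℂ) (μ : ℝ) : Prop :=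
  (∀ i, (Φᴴ * Φ) i i = 1) ∧ ∀ i j, i ≠ j → ‖(Φᴴ * Φ) i j‖ ≤ μ

def NullSpaceProperty [Fintype ι] (Φ : Matrix m ι ℂ) (t : ℕ) : Prop :=
  ∀ h : ι → ℂ, Φ *ᵥ h = 0 → h ≠ 0 → ∀ S : Finset ι, #S ≤ t →
    2 * ∑ i ∈ S, ‖h i‖ < ∑ i, ‖h i‖

theorem NullSpaceProperty.recoverable [Fintype ι] [DecidableEq ι] {Φ : Matrix m ι ℂ} {t : ℕ}
    (hΦ : Φ.NullSpaceProperty t) : Recoverable Φ t := by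
  intro x hx z hz hzx
  set S := univ.filter (fun i => x i ≠ 0)
  have hker : Φ *ᵥ (z - x) = 0 := by rw [mulVec_sub, hz, sub_self]
  have hS := hΦ (z - x) hker (sub_ne_zero.mpr hzx) S hx
  have hx_supp : ∑ i, ‖x i‖ = ∑ i ∈ S, ‖x i‖ :=
    (sum_filter_of_ne fun i _ hi => norm_ne_zero_iff.mp hi).symm
  have hz_off : ∑ i ∈ Sᶜ, ‖(z - x) i‖ = ∑ i ∈ Sᶜ, ‖z i‖ :=
    sum_congr rfl fun i hi => by simp_all [S]
  have hz_on : ∑ i ∈ S, ‖x i‖ ≤ ∑ i ∈ S, ‖z i‖ + ∑ i ∈ S, ‖(z - x) i‖ := by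
    rw [← sum_add_distrib]
    exact sum_le_sum fun i _ => by simpa [norm_sub_rev] using norm_le_norm_add_norm_sub' (x i) (z i)
  have hsplit := sum_add_sum_compl S (fun i => ‖(z - x) i‖)
  calc ∑ i, ‖x i‖ < ∑ i ∈ S, ‖z i‖ + ∑ i ∈ Sᶜ, ‖z i‖ := by linarith
    _ = ∑ i, ‖z i‖ := sum_add_sum_compl S _

namespace IsIncoherent

variable {Φ : Matrix m ι ℂ} {μ : ℝ}

theorem norm_le_of_mulVec_eq_zero [Fintype ι] (hΦ : Φ.IsIncoherent μ) {h : ι → ℂ}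
    (hh : Φ *ᵥ h = 0) (i : ι) : (1 + μ) * ‖h i‖ ≤ μ * ∑ j, ‖h j‖ := by
  classical
  have hgram : ∑ j, (Φᴴ * Φ) i j * h j = 0 := by
    have : (Φᴴ * Φ) *ᵥ h = 0 := by rw [← mulVec_mulVec, hh, mulVec_zero]
    exact congrFun this i
  rw [← add_sum_erase _ _ (mem_univ i), hΦ.1 i, one_mul, add_eq_zero_iff_eq_neg] at hgram
  have hbound : ‖h i‖ ≤ μ * ∑ j ∈ univ.erase i, ‖h j‖ := by
    rw [hgram, norm_neg, mul_sum]
    refine (norm_sum_le _ _).trans (sum_le_sum fun j hj => ?_)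
    rw [norm_mul]
    exact mul_le_mul_of_nonneg_right (hΦ.2 i j (ne_of_mem_erase hj).symm) (norm_nonneg _)
  rw [← add_sum_erase _ _ (mem_univ i)]
  linarith

theorem nullSpaceProperty [Fintype ι] (hΦ : Φ.IsIncoherent μ) (hμ : 0 ≤ μ) {t : ℕ}
    (ht : (2 * t - 1 : ℝ) * μ < 1) : Φ.NullSpaceProperty t := by
  intro h hh hh0 S hS
  set H := ∑ j, ‖h j‖
  have hH : 0 < H := by
    obtain ⟨i, hi⟩ := Function.ne_iff.mp hh0
    exact sum_pos' (fun j _ => norm_nonneg _) ⟨i, mem_univ i, norm_pos_iff.mpr hi⟩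
  have hS_bound : (1 + μ) * ∑ i ∈ S, ‖h i‖ ≤ t * (μ * H) :=
    calc (1 + μ) * ∑ i ∈ S, ‖h i‖ ≤ ∑ i ∈ S, μ * H := by
          rw [mul_sum]; exact sum_le_sum fun i _ => hΦ.norm_le_of_mulVec_eq_zero hh i
      _ = #S * (μ * H) := by rw [sum_const, nsmul_eq_mul]
      _ ≤ t * (μ * H) := by gcongr
  have hS0 : 0 ≤ ∑ i ∈ S, ‖h i‖ := sum_nonneg fun i _ => norm_nonneg _
  nlinarith

theorem mul_left {m' : Type*} [Fintype m'] [DecidableEq m] (hΦ : Φ.IsIncoherent μ)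
    {U : Matrix m' m ℂ} (hU : Uᴴ * U = 1) : (U * Φ).IsIncoherent μ := by
  have : (U * Φ)ᴴ * (U * Φ) = Φᴴ * Φ := by
    rw [conjTranspose_mul, Matrix.mul_assoc, ← Matrix.mul_assoc Uᴴ, hU, Matrix.one_mul]
  simpa only [IsIncoherent, this] using hΦ

theorem submatrix {ι' : Type*} (hΦ : Φ.IsIncoherent μ) {e : ι' → ι}
    (he : Function.Injective e) : (Φ.submatrix id e).IsIncoherent μ := by
  have : (Φ.submatrix id e)ᴴ * Φ.submatrix id e = (Φᴴ * Φ).submatrix e e := by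
    rw [conjTranspose_submatrix, submatrix_mul _ _ _ _ _ Function.bijective_id]
  simp only [IsIncoherent, this, submatrix_apply]
  exact ⟨fun i => hΦ.1 _, fun i j hij => hΦ.2 _ _ (he.ne hij)⟩

end IsIncoherent

end Matrix

namespace AddChar

variable {F : Type*} [Field F] [Fintype F] {ψ : AddChar F ℂ}

theorem norm_sum_quadratic (hF : ringChar F ≠ 2) (hψ : ψ.IsPrimitive) {d : F} (hd : d ≠ 0)
    (e : F) : ‖∑ x, ψ (d * x ^ 2 + e * x)‖ = √(Fintype.card F) := by
  classical
  set f : F → F := fun x => d * x ^ 2 + e * x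
  have hshift : ∀ y u, f (y + u) - f y = f u + y * (2 * d * u) := fun y u => by
    simp only [f]; ring
  have hinner : ∀ u, ∑ y, ψ (f (y + u) - f y) = if u = 0 then (Fintype.card F : ℂ) else 0 := by
    intro u
    simp_rw [hshift, map_add_eq_mul, ← mul_sum, sum_mulShift _ hψ,
      mul_eq_zero, Ring.two_ne_zero hF, hd, false_or]
    split_ifs with hu <;> simp [hu, f]
  have hsq : (∑ x, ψ (f x)) * (starRingEnd ℂ) (∑ x, ψ (f x)) = Fintype.card F := by
    calc (∑ x, ψ (f x)) * (starRingEnd ℂ) (∑ x, ψ (f x))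
        = ∑ y, ∑ x, ψ (f x - f y) := by
          simp_rw [map_sum, sum_mul_sum, sub_eq_add_neg, map_add_eq_mul, map_neg_eq_conj]
          exact sum_comm
      _ = ∑ y, ∑ u, ψ (f (y + u) - f y) := sum_congr rfl fun y _ =>
          (Fintype.sum_equiv (Equiv.addLeft y) _ _ fun u => rfl).symm
      _ = ∑ u, ∑ y, ψ (f (y + u) - f y) := sum_comm
      _ = Fintype.card F := by simp_rw [hinner]; simp
  rw [Complex.mul_conj'] at hsq
  rw [← Real.sqrt_sq (norm_nonneg _)]
  exact congrArg _ (by exact_mod_cast hsq)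

end AddChar

section ChirpFrame

variable {F : Type*} [Field F] [Fintype F]

noncomputable def chirpFrame (ψ : AddChar F ℂ) : Matrix F (F × F) ℂ :=
  fun x c => (√(Fintype.card F) : ℂ)⁻¹ * ψ (c.1 * x ^ 2 + c.2 * x)

theorem conjTranspose_chirpFrame_mul_self_apply (ψ : AddChar F ℂ) (c c' : F × F) :
    ((chirpFrame ψ)ᴴ * chirpFrame ψ) c c' =
      (Fintype.card F : ℂ)⁻¹ * ∑ x, ψ ((c'.1 - c.1) * x ^ 2 + (c'.2 - c.2) * x) := by
  have hcard : (√(Fintype.card F) : ℂ)⁻¹ * (√(Fintype.card F) : ℂ)⁻¹ = (Fintype.card F : ℂ)⁻¹ := by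
    rw [← mul_inv, ← Complex.ofReal_mul, Real.mul_self_sqrt (Nat.cast_nonneg _),
      Complex.ofReal_natCast]
  simp only [mul_apply, conjTranspose_apply, chirpFrame, Complex.star_def, map_mul, map_inv₀,
    Complex.conj_ofReal, ← AddChar.map_neg_eq_conj, mul_sum]
  refine sum_congr rfl fun x _ => ?_
  rw [← hcard, mul_mul_mul_comm, ← AddChar.map_add_eq_mul]
  congr 2
  ring

theorem isIncoherent_chirpFrame (hF : ringChar F ≠ 2) {ψ : AddChar F ℂ} (hψ : ψ.IsPrimitive) :
    (chirpFrame ψ).IsIncoherent (√(Fintype.card F))⁻¹ := by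
  classical
  have hq : (0 : ℝ) < Fintype.card F := by exact_mod_cast Fintype.card_pos
  refine ⟨fun c => ?_, fun c c' hcc' => ?_⟩
  · simp [conjTranspose_chirpFrame_mul_self_apply]
  rw [conjTranspose_chirpFrame_mul_self_apply, norm_mul, norm_inv, Complex.norm_natCast]
  by_cases ha : c'.1 - c.1 = 0
  · have hb : c'.2 - c.2 ≠ 0 := fun hb =>
      hcc' (Prod.ext (sub_eq_zero.mp ha) (sub_eq_zero.mp hb)).symm
    simp_rw [ha, zero_mul, zero_add, mul_comm _ (_ : F)]
    rw [AddChar.sum_mulShift _ hψ, if_neg hb, Nat.cast_zero, norm_zero, mul_zero]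
    positivity
  · rw [AddChar.norm_sum_quadratic hF hψ ha, inv_mul_eq_div, Real.sqrt_div_self', one_div]

end ChirpFrame

theorem exists_isIncoherent_of_prime {m ι : Type*} [Fintype m] [Fintype ι] {p : ℕ}
    [Fact p.Prime] (hp2 : p ≠ 2) (hm : p ≤ Fintype.card m) (hι : Fintype.card ι ≤ p ^ 2) :
    ∃ Φ : Matrix m ι ℂ, Φ.IsIncoherent (√p)⁻¹ := by
  classical
  obtain ⟨f⟩ : Nonempty (ZMod p ↪ m) := Function.Embedding.nonempty_of_card_le (by simpa using hm)
  obtain ⟨e⟩ : Nonempty (ι ↪ ZMod p × ZMod p) :=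
    Function.Embedding.nonempty_of_card_le (by simpa [sq] using hι)
  have hΨ := isIncoherent_chirpFrame (by rwa [ZMod.ringChar_zmod_n]) (ZMod.isPrimitive_stdAddChar p)
  rw [ZMod.card] at hΨ
  exact ⟨_, (hΨ.mul_left (conjTranspose_mul_self_one_submatrix f.injective)).submatrix e.injective⟩

theorem stmt_14_general (k : ℕ) :
    ∃ C : ℕ, ∀ n : ℕ, C < n →
      ∃ Φ : Matrix (Fin n) (Fin (k * n)) ℂ,
        ∀ t : ℕ, 0 < t → (t : ℝ) ≤ Real.sqrt n / 4 → Recoverable Φ t := by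
  refine ⟨4 * k + 4, fun n hn => ?_⟩
  obtain ⟨p, hp, hnp, hpn⟩ := Nat.exists_prime_lt_and_le_two_mul (n / 2) (by omega)
  have := Fact.mk hp
  have hcols : k * n ≤ p ^ 2 := by nlinarith [Nat.div_add_mod n 2, Nat.mod_lt n two_pos]
  obtain ⟨Φ, hΦ⟩ := exists_isIncoherent_of_prime (m := Fin n) (ι := Fin (k * n)) (p := p)
    (by omega) (by rw [Fintype.card_fin]; omega) (by rwa [Fintype.card_fin])
  refine ⟨Φ, fun t _ ht => (hΦ.nullSpaceProperty (by positivity) ?_).recoverable⟩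
  have hn4p : (n : ℝ) ≤ 4 * p := by exact_mod_cast (by omega : n ≤ 4 * p)
  have h2t : 2 * (t : ℝ) ≤ √p :=
    calc 2 * (t : ℝ) ≤ √n / 2 := by linarith
      _ ≤ √(2 ^ 2 * p) / 2 := by gcongr; linarith
      _ = √p := by rw [Real.sqrt_mul (by positivity), Real.sqrt_sq two_pos.le]; ring
  rw [← div_eq_mul_inv, div_lt_one (Real.sqrt_pos.mpr (by exact_mod_cast hp.pos))]
  linarith

/-- For every integer `k > 3` there is a constant `C_k` such that for every
`n > C_k` there exists an `n × kn` complex matrix with `(ℓ₁,t)`-recoverability for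
every positive integer `t ≤ √n/4`. -/
theorem stmt_14 (k : ℕ) (hk : 3 < k) :
    ∃ C : ℕ, ∀ n : ℕ, C < n →
      ∃ Φ : Matrix (Fin n) (Fin (k * n)) ℂ,
        ∀ t : ℕ, 0 < t → (t : ℝ) ≤ Real.sqrt n / 4 → Recoverable Φ t :=
  stmt_14_general k
end

section
/- For every rational number h > 3 there exists a constant C_h such that for every integer n > C_h there exists an n×⌊hn⌋ complex matrix with (ℓ₁,t)-recoverability for every positive integer t ≤ √n/4. -/
open scoped BigOperators

/-!
Take a prime `p` with `n/2 < p ≤ n` (Bertrand) and the chirp matrix on `ℤ/p` with columns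
`r ↦ e(a r² + b r)`, `(a, b) ∈ (ℤ/p)²`, keeping `⌊hn⌋ ≤ p²` of its columns and padding it with
zero rows. Its Gram matrix has diagonal `p`, and an off-diagonal entry is either a complete linear
character sum, hence `0`, or a quadratic Gauss sum, of modulus `√p`. A Gram matrix with diagonal
`a` and off-diagonal entries bounded by `b` gives the null space property of order `t`, hence
`ℓ₁`-recovery, as soon as `2tb < a + b`; here this reads `2t < √p + 1`, which holds for
`t ≤ √n/4` since `n < 2p`.
-/

open Finset Matrix

section Recovery

variable {m ι : Type*} [Fintype m] [Fintype ι] [DecidableEq ι]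

theorem recoverable_of_nullSpaceProperty (Φ : Matrix m ι ℂ) (t : ℕ)
    (hnsp : ∀ v, Φ *ᵥ v = 0 → v ≠ 0 → ∀ S : Finset ι, #S ≤ t →
      2 * ∑ i ∈ S, ‖v i‖ < ∑ i, ‖v i‖) :
    Recoverable Φ t := by
  intro x hx z hz hzx
  set S := univ.filter fun i => x i ≠ 0
  have hv : Φ *ᵥ (z - x) = 0 := by rw [mulVec_sub, hz, sub_self]
  have hpoint : ∀ i, ‖x i‖ + ‖(z - x) i‖ - (if i ∈ S then 2 * ‖(z - x) i‖ else 0) ≤ ‖z i‖ := by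
    intro i
    by_cases hi : i ∈ S
    · simp only [hi, if_true, Pi.sub_apply]
      have := norm_sub_le (z i) (z i - x i)
      rw [sub_sub_cancel] at this
      linarith
    · have hxi : x i = 0 := by simpa [S] using hi
      simp [hi, hxi]
  have hsum := sum_le_sum fun i (_ : i ∈ univ) => hpoint i
  rw [sum_sub_distrib, sum_add_distrib, ← sum_filter, filter_mem_eq_inter, univ_inter,
    ← mul_sum] at hsum
  linarith [hnsp _ hv (sub_ne_zero.2 hzx) S hx]

theorem norm_mul_le_of_mulVec_eq_zero {Φ : Matrix m ι ℂ} {a b : ℝ}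
    (hdiag : ∀ j, (Φᴴ * Φ) j j = a) (hoff : ∀ i j, i ≠ j → ‖(Φᴴ * Φ) i j‖ ≤ b)
    {v : ι → ℂ} (hv : Φ *ᵥ v = 0) (i : ι) :
    (a + b) * ‖v i‖ ≤ b * ∑ j, ‖v j‖ := by
  have hrow : (a : ℂ) * v i + ∑ j ∈ univ.erase i, (Φᴴ * Φ) i j * v j = 0 := by
    have := congrFun (show (Φᴴ * Φ) *ᵥ v = 0 by rw [← mulVec_mulVec, hv, mulVec_zero]) i
    rw [mulVec, dotProduct] at this
    rwa [← add_sum_erase _ _ (mem_univ i), hdiag] at this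
  have hbound : a * ‖v i‖ ≤ b * ∑ j ∈ univ.erase i, ‖v j‖ := calc
    a * ‖v i‖ ≤ ‖(a : ℂ) * v i‖ := by
      rw [norm_mul, Complex.norm_real, Real.norm_eq_abs]; gcongr; exact le_abs_self a
    _ = ‖∑ j ∈ univ.erase i, (Φᴴ * Φ) i j * v j‖ := by
      rw [eq_neg_of_add_eq_zero_left hrow, norm_neg]
    _ ≤ ∑ j ∈ univ.erase i, b * ‖v j‖ := by
      refine (norm_sum_le _ _).trans (sum_le_sum fun j hj => ?_)
      rw [norm_mul]
      gcongr
      exact hoff i j (ne_of_mem_erase hj).symm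
    _ = b * ∑ j ∈ univ.erase i, ‖v j‖ := by rw [mul_sum]
  rw [← add_sum_erase _ _ (mem_univ i)]
  linarith

theorem recoverable_of_gram {Φ : Matrix m ι ℂ} {a b : ℝ} {t : ℕ}
    (hdiag : ∀ j, (Φᴴ * Φ) j j = a) (hoff : ∀ i j, i ≠ j → ‖(Φᴴ * Φ) i j‖ ≤ b)
    (hb : 0 ≤ b) (ht : 2 * t * b < a + b) :
    Recoverable Φ t := by
  refine recoverable_of_nullSpaceProperty Φ t fun v hv hv0 S hS => ?_
  have hL : 0 < ∑ j, ‖v j‖ := by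
    obtain ⟨i, hi⟩ := Function.ne_iff.1 hv0
    exact sum_pos' (fun j _ => norm_nonneg _) ⟨i, mem_univ i, norm_pos_iff.2 hi⟩
  have hS' : (a + b) * ∑ i ∈ S, ‖v i‖ ≤ t * b * ∑ j, ‖v j‖ := calc
    (a + b) * ∑ i ∈ S, ‖v i‖ ≤ ∑ i ∈ S, b * ∑ j, ‖v j‖ := by
      rw [mul_sum]; exact sum_le_sum fun i _ => norm_mul_le_of_mulVec_eq_zero hdiag hoff hv i
    _ = #S * (b * ∑ j, ‖v j‖) := by rw [sum_const, nsmul_eq_mul]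
    _ ≤ t * b * ∑ j, ‖v j‖ := by rw [mul_assoc]; gcongr
  have hab : 0 < a + b := by nlinarith [t.cast_nonneg (α := ℝ)]
  nlinarith

end Recovery

section Chirp

open ZMod

variable {p : ℕ}

theorem sum_stdAddChar_mul_eq_zero [NeZero p] {c : ZMod p} (hc : c ≠ 0) :
    ∑ r : ZMod p, stdAddChar (c * r) = 0 := by
  simpa using AddChar.sum_eq_zero_of_ne_one (isPrimitive_stdAddChar p hc)

theorem norm_sum_stdAddChar_quadratic [Fact p.Prime] (hp : p ≠ 2) {c : ZMod p} (hc : c ≠ 0)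
    (d : ZMod p) :
    ‖∑ r : ZMod p, stdAddChar (c * r ^ 2 + d * r)‖ = Real.sqrt p := by
  set f : ZMod p → ZMod p := fun r => c * r ^ 2 + d * r
  have h2c : (2 * c : ZMod p) ≠ 0 := by
    refine mul_ne_zero (fun h2 => hp ?_) hc
    exact ((Nat.prime_dvd_prime_iff_eq Fact.out Nat.prime_two).1
      ((ZMod.natCast_eq_zero_iff 2 p).1 (by exact_mod_cast h2)))
  -- substituting `r = s + u`, the phase `f (s + u) - f s` is affine in `s` with slope `2 c u`
  have hsq : (‖∑ r, stdAddChar (f r)‖ ^ 2 : ℂ) = p := calc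
    _ = ∑ s, ∑ u, stdAddChar (f (s + u) - f s) := by
      rw [← Complex.conj_mul', map_sum, sum_mul_sum]
      refine sum_congr rfl fun s _ => ?_
      rw [← Equiv.sum_comp (Equiv.addLeft s)]
      refine sum_congr rfl fun u _ => ?_
      rw [← AddChar.map_neg_eq_conj, ← AddChar.map_add_eq_mul, Equiv.coe_addLeft, neg_add_eq_sub]
    _ = ∑ u, (∑ s, stdAddChar (2 * c * u * s)) * stdAddChar (f u) := by
      rw [sum_comm]
      refine sum_congr rfl fun u _ => ?_
      rw [sum_mul]
      refine sum_congr rfl fun s _ => ?_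
      rw [← AddChar.map_add_eq_mul]
      congr 1
      ring
    _ = p := by
      rw [sum_eq_single 0 (fun u _ hu => by rw [sum_stdAddChar_mul_eq_zero
        (mul_ne_zero h2c hu), zero_mul]) (by simp)]
      simp [f]
  rw [← Real.sqrt_sq (norm_nonneg _)]
  exact_mod_cast congrArg Real.sqrt (by exact_mod_cast hsq)

noncomputable def chirpMatrix (p : ℕ) [NeZero p] : Matrix (ZMod p) (ZMod p × ZMod p) ℂ :=
  Matrix.of fun r c => stdAddChar (c.1 * r ^ 2 + c.2 * r)

theorem chirpMatrix_gram_apply [NeZero p] (c c' : ZMod p × ZMod p) :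
    ((chirpMatrix p)ᴴ * chirpMatrix p) c c' =
      ∑ r, stdAddChar ((c'.1 - c.1) * r ^ 2 + (c'.2 - c.2) * r) := by
  simp only [mul_apply, conjTranspose_apply, chirpMatrix, of_apply]
  refine sum_congr rfl fun r _ => ?_
  rw [RCLike.star_def, ← AddChar.map_neg_eq_conj, ← AddChar.map_add_eq_mul]
  ring_nf

theorem chirpMatrix_gram_diag [NeZero p] (c : ZMod p × ZMod p) :
    ((chirpMatrix p)ᴴ * chirpMatrix p) c c = p := by
  simp [chirpMatrix_gram_apply]

theorem norm_chirpMatrix_gram_le [Fact p.Prime] (hp : p ≠ 2) {c c' : ZMod p × ZMod p}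
    (hcc' : c ≠ c') :
    ‖((chirpMatrix p)ᴴ * chirpMatrix p) c c'‖ ≤ Real.sqrt p := by
  rw [chirpMatrix_gram_apply]
  by_cases h1 : c'.1 - c.1 = 0
  · have h2 : c'.2 - c.2 ≠ 0 := fun h2 =>
      hcc' (Prod.ext (sub_eq_zero.1 h1).symm (sub_eq_zero.1 h2).symm)
    simp only [h1, zero_mul, zero_add, sum_stdAddChar_mul_eq_zero h2, norm_zero]
    positivity
  · exact (norm_sum_stdAddChar_quadratic hp h1 _).le

end Chirp

theorem Matrix.exists_conjTranspose_mul_self_eq {m m' ι R : Type*} [Fintype m] [Fintype m']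
    [Semiring R] [StarRing R] (A : Matrix m ι R) (h : Fintype.card m ≤ Fintype.card m') :
    ∃ B : Matrix m' ι R, Bᴴ * B = Aᴴ * A := by
  let e : m ⊕ Fin (Fintype.card m' - Fintype.card m) ≃ m' :=
    Fintype.equivOfCardEq (by simp only [Fintype.card_sum, Fintype.card_fin]; omega)
  refine ⟨(fromRows A 0).submatrix e.symm id, ?_⟩
  rw [conjTranspose_submatrix, submatrix_mul_equiv _ _ _ e.symm, submatrix_id_id,
    conjTranspose_fromRows_eq_fromCols_conjTranspose, fromCols_mul_fromRows]
  simp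

theorem floor_mul_le_mul_self {h : ℚ} {n p : ℕ} (hn : 4 * h ≤ n) (hp : n < 2 * p) :
    ⌊h * n⌋₊ ≤ p * p := by
  refine Nat.floor_le_of_le ?_
  have hp' : (n : ℚ) < 2 * p := by exact_mod_cast hp
  push_cast
  nlinarith [(n.cast_nonneg : (0 : ℚ) ≤ n)]

theorem two_mul_mul_sqrt_lt {n p t : ℕ} (hp : n < 2 * p) (ht : (t : ℝ) ≤ Real.sqrt n / 4) :
    2 * t * Real.sqrt p < p + Real.sqrt p := by
  have hp0 : 0 < Real.sqrt p := Real.sqrt_pos.2 (by exact_mod_cast (by omega : 0 < p))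
  have hsqrt : Real.sqrt n < 2 * Real.sqrt p := by
    rw [Real.sqrt_lt' (by positivity), mul_pow, Real.sq_sqrt p.cast_nonneg]
    norm_num
    exact_mod_cast (by omega : n < 4 * p)
  have hpp : Real.sqrt p * Real.sqrt p = p := Real.mul_self_sqrt p.cast_nonneg
  nlinarith

/-- For every rational `h > 3` there is a constant `C_h` such that for every
`n > C_h` there exists an `n × ⌊hn⌋` complex matrix with `(ℓ₁,t)`-recoverability for
every positive integer `t ≤ √n/4`. -/
theorem stmt_15 (h : ℚ) (hh : 3 < h) :
    ∃ C : ℕ, ∀ n : ℕ, C < n →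
      ∃ Φ : Matrix (Fin n) (Fin ⌊h * (n : ℚ)⌋₊) ℂ,
        ∀ t : ℕ, 0 < t → (t : ℝ) ≤ Real.sqrt n / 4 → Recoverable Φ t := by
  refine ⟨⌈4 * h⌉₊, fun n hn => ?_⟩
  have h4n : 4 * h ≤ n := (Nat.le_ceil _).trans (by exact_mod_cast hn.le)
  have hn12 : 12 < n := by
    have := Nat.lt_ceil.2 (by push_cast; linarith : ((12 : ℕ) : ℚ) < 4 * h)
    omega
  obtain ⟨p, hp, hnp, hpn⟩ := Nat.exists_prime_lt_and_le_two_mul (n / 2) (by omega)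
  have := Fact.mk hp
  have hn2p : n < 2 * p := by omega
  obtain ⟨e⟩ : Nonempty (Fin ⌊h * n⌋₊ ↪ ZMod p × ZMod p) :=
    Function.Embedding.nonempty_of_card_le
      (by simpa [ZMod.card] using floor_mul_le_mul_self h4n hn2p)
  obtain ⟨Φ, hΦ⟩ := ((chirpMatrix p).submatrix id e).exists_conjTranspose_mul_self_eq
    (m' := Fin n) (by simpa [ZMod.card] using (by omega : p ≤ n))
  rw [conjTranspose_submatrix, ← submatrix_mul _ _ _ id _ Function.bijective_id] at hΦ
  refine ⟨Φ, fun t _ ht => recoverable_of_gram (fun j => ?_) (fun i j hij => ?_)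
    (Real.sqrt_nonneg _) (two_mul_mul_sqrt_lt hn2p ht)⟩
  · rw [hΦ, submatrix_apply, chirpMatrix_gram_diag, Complex.ofReal_natCast]
  · rw [hΦ]
    exact norm_chirpMatrix_gram_le (by omega) (e.injective.ne hij)
end

section
/- Let K_min, v, n, N be positive integers with K_min ≥ 2, n < N, N ≥ n·K_min, and n ≤ v(v−1)/(K_min(K_min−1)). Then μ_{n,N} = √((N−n)/((N−1)n)) ≥ (K_min−1)/(v+K_min−2). -/
open scoped BigOperators

/-- If `K_min ≥ 2`, `n < N`, `N ≥ n·K_min` and `n ≤ v(v−1)/(K_min(K_min−1))`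
(all positive integers), then `μ_{n,N} ≥ (K_min−1)/(v+K_min−2)`. -/
theorem stmt_18 (Kmin v n N : ℕ)
    (hvpos : 0 < v) (hnpos : 0 < n) (hNpos : 0 < N)
    (h0 : 2 ≤ Kmin) (h1 : n < N) (h2 : n * Kmin ≤ N)
    (h3 : (n : ℝ) ≤ (v : ℝ) * ((v : ℝ) - 1) / ((Kmin : ℝ) * ((Kmin : ℝ) - 1))) :
    ((Kmin : ℝ) - 1) / ((v : ℝ) + (Kmin : ℝ) - 2) ≤ welch n N := by
  have hK : (2:ℝ) ≤ Kmin := by exact_mod_cast h0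
  have hn : (1:ℝ) ≤ n := by exact_mod_cast hnpos
  have hv : (1:ℝ) ≤ v := by exact_mod_cast hvpos
  have h1' : (n:ℝ) < N := by exact_mod_cast h1
  have h2' : (n:ℝ) * Kmin ≤ N := by exact_mod_cast h2
  have hKK : (0:ℝ) < (Kmin:ℝ) * ((Kmin:ℝ) - 1) := by nlinarith
  have h3' : (n:ℝ) * ((Kmin:ℝ) * ((Kmin:ℝ) - 1)) ≤ (v:ℝ) * ((v:ℝ) - 1) :=
    (le_div_iff₀ hKK).mp h3
  have hden : (0:ℝ) < (v:ℝ) + (Kmin:ℝ) - 2 := by linarith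
  have hden2 : (0:ℝ) < ((N:ℝ) - 1) * n := by nlinarith
  rw [welch, Real.le_sqrt (by apply div_nonneg <;> linarith) (by apply div_nonneg <;> linarith)]
  rw [div_pow, div_le_div_iff₀ (by positivity) hden2]
  nlinarith [mul_le_mul_of_nonneg_left h2' (by linarith : (0:ℝ) ≤ (Kmin:ℝ) - 1),
    mul_le_mul_of_nonneg_left h3' (by linarith : (0:ℝ) ≤ (N:ℝ) - n),
    sq_nonneg ((Kmin:ℝ) - 2), mul_pos hden hden,
    mul_le_mul_of_nonneg_left (sub_nonneg.2 hv) (by nlinarith : (0:ℝ) ≤ ((N:ℝ)-n)*((Kmin:ℝ)-2))]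
end
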